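/- arXiv:1602.09012 — 8 statements merged into one kernel-verified Lean document; each statement's English description precedes it below -/
import Mathlib

section
/- Let G be a finite abelian group and H ≤ G a subgroup such that no window ψ ∈ ℂ^H generates a full spark Gabor frame over H. Then no window φ ∈ ℂ^G generates a full spark Gabor frame over G. (Hereditary property of spark deficiency.) -/
/-- The time–frequency shift `π(x,ξ) f = M_ξ T_x f` of a window `f`. -/
def timeFreqShift {G : Type*} [AddCommGroup G] (p : G × AddChar G ℂ)
    (f : G → ℂ) : G → ℂ :=
  fun g => p.2 g * f (g - p.1)

/-- The Gabor system `(f, G × Ĝ)` is full spark: every `|G|` of its vectors are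
linearly independent. -/
def GaborFullSpark {G : Type*} [AddCommGroup G] [Fintype G] (f : G → ℂ) : Prop :=
  ∀ Λ : Finset (G × AddChar G ℂ), Λ.card = Fintype.card G →
    LinearIndependent ℂ (fun p : Λ => timeFreqShift (p : G × AddChar G ℂ) f)

open Finset

namespace GaborAux

variable {G : Type*} [AddCommGroup G] (H : AddSubgroup G)

/-- Restriction of complex characters to a subgroup, as a monoid hom. -/
def resChar : AddChar G ℂ →* AddChar H ℂ where
  toFun ξ := ξ.compAddMonoidHom H.subtype
  map_one' := by ext h; simp
  map_mul' ξ₁ ξ₂ := by ext h; simp [AddChar.mul_apply]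

@[simp] lemma resChar_apply (ξ : AddChar G ℂ) (h : H) : resChar H ξ h = ξ (h : G) := rfl

/-- Inflation of characters from the quotient. -/
def infChar : AddChar (G ⧸ H) ℂ →* AddChar G ℂ where
  toFun χ := χ.compAddMonoidHom (QuotientAddGroup.mk' H)
  map_one' := by ext g; simp
  map_mul' χ₁ χ₂ := by ext g; simp [AddChar.mul_apply]

@[simp] lemma infChar_apply (χ : AddChar (G ⧸ H) ℂ) (g : G) :
    infChar H χ g = χ (QuotientAddGroup.mk g) := rfl

lemma infChar_injective : Function.Injective (infChar H) :=
  AddChar.compAddMonoidHom_injective_left _ (QuotientAddGroup.mk'_surjective H)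

lemma resChar_infChar (χ : AddChar (G ⧸ H) ℂ) : resChar H (infChar H χ) = 1 := by
  ext h
  have : (QuotientAddGroup.mk (h : G) : G ⧸ H) = 0 := (QuotientAddGroup.eq_zero_iff _).2 h.2
  simp [this]

lemma range_infChar : (infChar H).range = (resChar H).ker := by
  ext ξ
  constructor
  · rintro ⟨χ, rfl⟩
    exact MonoidHom.mem_ker.2 (resChar_infChar H χ)
  · intro hξ
    have hξ' : ∀ h : H, ξ (h : G) = 1 := fun h => by
      have := DFunLike.congr_fun (MonoidHom.mem_ker.1 hξ) h
      simpa using this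
    have hcomp : ∀ a b : G, @Setoid.r G (QuotientAddGroup.leftRel H) a b → ξ a = ξ b := by
      intro a b hab
      rw [QuotientAddGroup.leftRel_apply] at hab
      have : ξ b = ξ a * ξ (-a + b) := by
        rw [← AddChar.map_add_eq_mul, add_neg_cancel_left]
      rw [this, hξ' ⟨-a + b, hab⟩, mul_one]
    refine ⟨{ toFun := fun q => Quotient.liftOn' q ξ hcomp
              map_zero_eq_one' := ξ.map_zero_eq_one
              map_add_eq_mul' := fun a b => ?_ }, ?_⟩
    · refine Quotient.inductionOn₂' a b fun x y => ?_
      exact ξ.map_add_eq_mul x y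
    · ext g
      rfl

lemma natCard_addChar (α : Type*) [AddCommGroup α] [Finite α] :
    Nat.card (AddChar α ℂ) = Nat.card α := by
  cases nonempty_fintype α
  simp [Nat.card_eq_fintype_card, AddChar.card_eq]

lemma resChar_surjective [Finite G] : Function.Surjective (resChar H) := by
  have hfinH : Finite H := Subtype.finite
  have hfinQ : Finite (G ⧸ H) := Quotient.finite _
  rw [← MonoidHom.range_eq_top]
  apply Subgroup.eq_top_of_card_eq
  have c1 : Nat.card (AddChar G ℂ) =
      Nat.card (AddChar G ℂ ⧸ (resChar H (G := G)).ker) * Nat.card (resChar H (G := G)).ker :=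
    Subgroup.card_eq_card_quotient_mul_card_subgroup _
  have c2 : Nat.card (resChar H (G := G)).ker = Nat.card (G ⧸ H) := by
    rw [← range_infChar]
    rw [Nat.card_congr (MonoidHom.ofInjective (infChar_injective H)).symm.toEquiv]
    exact natCard_addChar _
  have c3 : Nat.card (AddChar G ℂ ⧸ (resChar H (G := G)).ker) = Nat.card (resChar H (G := G)).range :=
    Nat.card_congr (QuotientGroup.quotientKerEquivRange _).toEquiv
  have c4 : Nat.card G = Nat.card (G ⧸ H) * Nat.card H :=
    AddSubgroup.card_eq_card_quotient_mul_card_addSubgroup H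
  have hQpos : 0 < Nat.card (G ⧸ H) := Nat.card_pos
  have key : Nat.card (resChar H (G := G)).range * Nat.card (G ⧸ H) = Nat.card H * Nat.card (G ⧸ H) := by
    have e1 : Nat.card (AddChar G ℂ ⧸ (resChar H (G := G)).ker) * Nat.card (G ⧸ H) = Nat.card G := by
      rw [← c2, ← c1, natCard_addChar]
    rw [← c3, e1, c4, Nat.mul_comm]
  have h5 := Nat.eq_of_mul_eq_mul_right hQpos key
  rw [h5, natCard_addChar]

end GaborAux

open GaborAux

/-- Hereditary property of spark deficiency: if no window on a subgroup `H ≤ G`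
generates a full spark Gabor frame over `H`, then no window on `G` generates a
full spark Gabor frame over `G`. -/
theorem gabor_sparkDeficient_hereditary {G : Type*} [AddCommGroup G] [Fintype G]
    (H : AddSubgroup G) [Fintype H]
    (hH : ∀ ψ : H → ℂ, ¬ GaborFullSpark ψ) :
    ∀ φ : G → ℂ, ¬ GaborFullSpark φ := by
  classical
  intro φ hφ
  letI : Fintype (G ⧸ H) := Fintype.ofFinite _
  -- the restricted window
  set ψ : H → ℂ := fun h => φ (h : G) with hψdef
  have hnot := hH ψ
  unfold GaborFullSpark at hnot
  push_neg at hnot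
  obtain ⟨ΛH, hΛHcard, hnLI⟩ := hnot
  rw [Fintype.linearIndependent_iff] at hnLI
  push_neg at hnLI
  obtain ⟨c, hc0, i₀, hi₀⟩ := hnLI
  -- total coefficient function on H × Ĥ
  set cT : H × AddChar H ℂ → ℂ := fun p => if hp : p ∈ ΛH then c ⟨p, hp⟩ else 0 with hcTdef
  have hcT : ∀ i : ΛH, cT (i : H × AddChar H ℂ) = c i := by
    rintro ⟨p, hp⟩; simp [hcTdef, dif_pos hp]
  -- dependency over the finset ΛH
  have hdepH : ∑ p ∈ ΛH, cT p • timeFreqShift p ψ = 0 := by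
    rw [← Finset.sum_coe_sort ΛH (fun p => cT p • timeFreqShift p ψ)]
    rw [← hc0]
    exact Finset.sum_congr rfl fun i _ => by rw [hcT]
  -- extension of characters
  have hsurj := resChar_surjective H
  set ext : AddChar H ℂ → AddChar G ℂ := Function.surjInv hsurj with hextdef
  have hext : ∀ ξ : AddChar H ℂ, resChar H (ext ξ) = ξ := fun ξ => Function.surjInv_eq hsurj ξ
  -- the lifted index map
  set F : (H × AddChar H ℂ) × AddChar (G ⧸ H) ℂ → G × AddChar G ℂ :=
    fun pc => ((pc.1.1 : G), ext pc.1.2 * infChar H pc.2) with hFdef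
  have hFinj : Function.Injective F := by
    rintro ⟨⟨x₁, ξ₁⟩, χ₁⟩ ⟨⟨x₂, ξ₂⟩, χ₂⟩ hpq
    have h1 : (x₁ : G) = (x₂ : G) := congrArg Prod.fst hpq
    have h2 : ext ξ₁ * infChar H χ₁ = ext ξ₂ * infChar H χ₂ := congrArg Prod.snd hpq
    have hx : x₁ = x₂ := Subtype.ext h1
    have hξ : ξ₁ = ξ₂ := by
      have := congrArg (resChar H) h2
      rwa [map_mul, map_mul, resChar_infChar, resChar_infChar, mul_one, mul_one,
        hext, hext] at this
    have hχ : χ₁ = χ₂ := by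
      apply infChar_injective H
      apply mul_left_cancel (a := ext ξ₁)
      rw [h2, hξ]
    simp [hx, hξ, hχ]
  -- the lifted index set
  set ΛG : Finset (G × AddChar G ℂ) :=
    (ΛH ×ˢ (Finset.univ : Finset (AddChar (G ⧸ H) ℂ))).image F with hΛGdef
  have hΛGcard : ΛG.card = Fintype.card G := by
    rw [hΛGdef, Finset.card_image_of_injective _ hFinj, Finset.card_product, hΛHcard,
      Finset.card_univ, AddChar.card_eq]
    have := AddSubgroup.card_eq_card_quotient_mul_card_addSubgroup H
    simp only [Nat.card_eq_fintype_card] at this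
    rw [this, Nat.mul_comm]
  -- lifted coefficients
  set d : G × AddChar G ℂ → ℂ :=
    fun q => if hx : q.1 ∈ H then cT (⟨q.1, hx⟩, resChar H q.2) else 0 with hddef
  have hdF : ∀ pc : (H × AddChar H ℂ) × AddChar (G ⧸ H) ℂ, d (F pc) = cT pc.1 := by
    rintro ⟨⟨x, ξ⟩, χ⟩
    have hx : (F ((x, ξ), χ)).1 ∈ H := x.2
    rw [hddef]
    simp only [dif_pos hx]
    congr 1
    refine Prod.ext ?_ ?_
    · exact Subtype.ext rfl
    · show resChar H (ext ξ * infChar H χ) = ξ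
      rw [map_mul, resChar_infChar, mul_one, hext]
  -- the dependency over G
  have hsum : ∑ q : ΛG, d (q : G × AddChar G ℂ) • timeFreqShift (q : G × AddChar G ℂ) φ = 0 := by
    rw [Finset.sum_coe_sort ΛG (fun q => d q • timeFreqShift q φ), hΛGdef,
      Finset.sum_image (fun a _ b _ h => hFinj h), Finset.sum_product]
    funext g
    simp only [Finset.sum_apply, Pi.zero_apply, Pi.smul_apply, smul_eq_mul]
    have hterm : ∀ p ∈ ΛH, ∑ χ : AddChar (G ⧸ H) ℂ,
        d (F (p, χ)) * timeFreqShift (F (p, χ)) φ g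
        = (cT p * ext p.2 g * φ (g - (p.1 : G))) *
            (if (QuotientAddGroup.mk g : G ⧸ H) = 0 then (Fintype.card (G ⧸ H) : ℂ) else 0) := by
      intro p _
      rw [← AddChar.sum_apply_eq_ite, Finset.mul_sum]
      refine Finset.sum_congr rfl fun χ _ => ?_
      rw [hdF]
      show cT p * ((ext p.2 * infChar H χ) g * φ (g - (p.1 : G))) = _
      rw [AddChar.mul_apply, infChar_apply]
      ring
    rw [Finset.sum_congr rfl hterm]
    by_cases hg : g ∈ H
    · rw [if_pos ((QuotientAddGroup.eq_zero_iff g).2 hg), ← Finset.sum_mul]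
      have hzero : ∑ p ∈ ΛH, cT p * ext p.2 g * φ (g - (p.1 : G)) = 0 := by
        have := congrFun hdepH ⟨g, hg⟩
        simp only [Finset.sum_apply, Pi.zero_apply, Pi.smul_apply, smul_eq_mul] at this
        rw [← this]
        refine Finset.sum_congr rfl fun p _ => ?_
        show cT p * ext p.2 g * φ (g - (p.1 : G)) = cT p * timeFreqShift p ψ ⟨g, hg⟩
        have hres : ext p.2 g = p.2 ⟨g, hg⟩ := by
          conv_rhs => rw [← hext p.2]
          rfl
        have hφψ : φ (g - (p.1 : G)) = ψ (⟨g, hg⟩ - p.1) := by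
          rw [hψdef]; congr 1
        rw [timeFreqShift, hres, hφψ]; ring
      rw [hzero, zero_mul]
    · rw [if_neg (fun h => hg ((QuotientAddGroup.eq_zero_iff g).1 h))]
      simp
  -- contradiction with full spark
  have hLI := hφ ΛG hΛGcard
  rw [Fintype.linearIndependent_iff] at hLI
  have hq₀mem : F ((i₀ : H × AddChar H ℂ), (1 : AddChar (G ⧸ H) ℂ)) ∈ ΛG := by
    rw [hΛGdef]
    exact Finset.mem_image_of_mem F (Finset.mem_product.2 ⟨i₀.2, Finset.mem_univ _⟩)
  have := hLI (fun q => d (q : G × AddChar G ℂ)) hsum ⟨_, hq₀mem⟩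
  rw [hdF, hcT] at this
  exact hi₀ this
end

section
/- Let G be a finite abelian group of order N containing a subgroup isomorphic to the Klein four-group. Then for every f ∈ ℂ^G, the Gabor frame (f, G × Ĝ) is spark deficient; moreover there are at least 3N/2 pairs (a,ξ) ∈ G × Ĝ such that M_ξ T_a f is orthogonal to conj(f), so ‖V_f conj(f)‖₀ ≤ N² − 3N/2. -/
open Finset

theorem not_linearIndependent_of_forall_mem_of_ne_top {K V ι : Type*} [DivisionRing K]
    [AddCommGroup V] [Module K V] [FiniteDimensional K V] [Fintype ι] {v : ι → V}
    {W : Submodule K V} (hW : W ≠ ⊤) (hv : ∀ i, v i ∈ W)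
    (hcard : Module.finrank K V ≤ Fintype.card ι) : ¬ LinearIndependent K v := by
  intro hli
  have hspan : Fintype.card ι ≤ Module.finrank K W :=
    finrank_span_eq_card hli ▸
      Submodule.finrank_mono (Submodule.span_le.mpr (Set.range_subset_iff.mpr hv))
  have := Submodule.finrank_lt hW
  omega

theorem AddChar.apply_eq_one_or_eq_neg_one {G R : Type*} [AddCommGroup G] [CommRing R]
    [NoZeroDivisors R] {a : G} (ha : a + a = 0) (ξ : AddChar G R) : ξ a = 1 ∨ ξ a = -1 :=
  mul_self_eq_one_iff.mp (by rw [← AddChar.map_add_eq_mul, ha, AddChar.map_zero_eq_one])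

theorem AddChar.two_mul_card_apply_eq_neg_one {G : Type*} [AddCommGroup G] [Fintype G] {a : G}
    (h2a : a + a = 0) (ha : a ≠ 0) : 2 * #{ξ : AddChar G ℂ | ξ a = -1} = Fintype.card G := by
  obtain ⟨ξ₀, hξ₀⟩ := AddChar.exists_apply_ne_zero.mpr ha
  replace hξ₀ : ξ₀ a = -1 := (apply_eq_one_or_eq_neg_one h2a ξ₀).resolve_left hξ₀
  have hswap : #{ξ : AddChar G ℂ | ¬ ξ a = -1} = #{ξ : AddChar G ℂ | ξ a = -1} := by
    refine card_equiv (Equiv.mulLeft ξ₀) fun ξ => ?_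
    rcases apply_eq_one_or_eq_neg_one h2a ξ with h | h <;> norm_num [hξ₀, h]
  have hsplit := card_filter_add_card_filter_not (s := univ) fun ξ : AddChar G ℂ => ξ a = -1
  rw [card_univ, AddChar.card_eq] at hsplit
  omega

theorem AddChar.sum_mul_translate_mul_eq_zero {G R : Type*} [AddCommGroup G] [Fintype G]
    [CommRing R] [IsAddTorsionFree R] (f : G → R) {a : G} (h2a : a + a = 0) {ξ : AddChar G R}
    (hξ : ξ a = -1) : ∑ g, ξ g * f (g - a) * f g = 0 := by
  refine self_eq_neg.mp ?_
  calc ∑ g, ξ g * f (g - a) * f g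
      = ∑ g, ξ (g + a) * f (g + a - a) * f (g + a) :=
        (Fintype.sum_equiv (Equiv.addRight a) _ _ fun _ => rfl).symm
    _ = -∑ g, ξ g * f (g - a) * f g := by
        rw [← sum_neg_distrib]
        refine sum_congr rfl fun g _ => ?_
        rw [add_sub_cancel_right, AddChar.map_add_eq_mul, hξ, ← sub_neg_eq_add,
          neg_eq_of_add_eq_zero_left h2a]
        ring

theorem card_mul_le_two_mul_card_timeFreqShift_orthogonal {G : Type*} [AddCommGroup G]
    [Fintype G] (f : G → ℂ) {A : Finset G} (hA : ∀ a ∈ A, a + a = 0 ∧ a ≠ 0) :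
    #A * Fintype.card G ≤ 2 * #{p : G × AddChar G ℂ | timeFreqShift p f ⬝ᵥ f = 0} := by
  let S := A.sigma fun a => ({ξ : AddChar G ℂ | ξ a = -1} : Finset _)
  calc #A * Fintype.card G
      = 2 * #S := by
        rw [card_sigma, mul_sum, card_eq_sum_ones, sum_mul, one_mul]
        exact sum_congr rfl fun a ha =>
          (AddChar.two_mul_card_apply_eq_neg_one (hA a ha).1 (hA a ha).2).symm
    _ ≤ 2 * #{p : G × AddChar G ℂ | timeFreqShift p f ⬝ᵥ f = 0} := by
        refine Nat.mul_le_mul_left 2 (card_le_card_of_injOn (Equiv.sigmaEquivProd _ _) ?_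
          (Equiv.injective _).injOn)
        rintro ⟨a, ξ⟩ hp
        simp only [S, coe_sigma, Set.mem_sigma_iff, coe_filter, mem_univ, true_and,
          Set.mem_ofPred_eq, mem_coe, Equiv.sigmaEquivProd_apply] at hp ⊢
        exact AddChar.sum_mul_translate_mul_eq_zero f (hA _ hp.1).1 hp.2

theorem AddSubgroup.card_eq_four_of_addEquiv {G : Type*} [AddCommGroup G] {K : AddSubgroup G}
    (e : K ≃+ ZMod 2 × ZMod 2) : Nat.card K = 4 := by
  rw [Nat.card_congr e.toEquiv, Nat.card_prod, Nat.card_zmod]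

theorem AddSubgroup.add_self_eq_zero_of_addEquiv {G : Type*} [AddCommGroup G] {K : AddSubgroup G}
    (e : K ≃+ ZMod 2 × ZMod 2) {x : G} (hx : x ∈ K) : x + x = 0 := by
  have hklein : ∀ z : ZMod 2 × ZMod 2, z + z = 0 := by decide
  have : (⟨x, hx⟩ + ⟨x, hx⟩ : K) = 0 := e.injective (by rw [map_add, hklein, map_zero])
  exact congrArg Subtype.val this

theorem three_mul_card_le_two_mul_card_timeFreqShift_orthogonal {G : Type*} [AddCommGroup G]
    [Fintype G] {K : AddSubgroup G} (e : K ≃+ ZMod 2 × ZMod 2) (f : G → ℂ) :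
    3 * Fintype.card G ≤ 2 * #{p : G × AddChar G ℂ | timeFreqShift p f ⬝ᵥ f = 0} := by
  classical
  let A : Finset G := ({x | x ∈ K} : Finset G).erase 0
  have hA : #A = 3 := by
    rw [card_erase_of_mem (by simp), ← Nat.subtype_card (p := (· ∈ K)) _ (by simp),
      AddSubgroup.card_eq_four_of_addEquiv e]
  have hA' : ∀ a ∈ A, a + a = 0 ∧ a ≠ 0 := by
    intro a ha
    simp only [A, mem_erase, mem_filter, mem_univ, true_and] at ha
    exact ⟨AddSubgroup.add_self_eq_zero_of_addEquiv e ha.2, ha.1⟩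
  simpa only [hA] using card_mul_le_two_mul_card_timeFreqShift_orthogonal f hA'

open scoped ComplexOrder in
theorem not_gaborFullSpark_of_card_le {G : Type*} [AddCommGroup G] [Fintype G] {f : G → ℂ}
    (h : Fintype.card G ≤ #{p : G × AddChar G ℂ | timeFreqShift p f ⬝ᵥ f = 0}) :
    ¬ GaborFullSpark f := by
  intro hfs
  obtain ⟨Λ, hΛ, hcard⟩ := exists_subset_card_eq h
  have hli := hfs Λ hcard
  have horth : ∀ p : Λ, timeFreqShift p f ⬝ᵥ f = 0 := fun p => by simpa using hΛ p.2
  rcases eq_or_ne f 0 with rfl | hf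
  · obtain ⟨p, hp⟩ : Λ.Nonempty := card_pos.mp (hcard ▸ Fintype.card_pos)
    exact hli.ne_zero ⟨p, hp⟩ (funext fun g => by simp [timeFreqShift])
  · refine not_linearIndependent_of_forall_mem_of_ne_top
      (W := LinearMap.ker ((dotProductBilin ℂ ℂ).flip f)) ?_ horth (by simp [hcard]) hli
    intro htop
    have := LinearMap.congr_fun (LinearMap.ker_eq_top.mp htop) (star f)
    simp only [LinearMap.flip_apply, dotProductBilin_apply_apply, LinearMap.zero_apply] at this
    exact hf (dotProduct_star_self_eq_zero.mp this)

/-- If `G` (of order `N`) contains a Klein four-subgroup, then every Gabor frame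
`(f, G × Ĝ)` is spark deficient; moreover at least `3N/2` of the time–frequency
translates `M_ξ T_a f` are orthogonal to `conj f`, so that
`‖V_f (conj f)‖₀ ≤ N² - 3N/2`. -/
theorem gabor_sparkDeficient_of_klein_subgroup {G : Type*} [AddCommGroup G]
    [Fintype G] (K : AddSubgroup G) (hK : Nonempty (K ≃+ (ZMod 2 × ZMod 2)))
    (f : G → ℂ) :
    ¬ GaborFullSpark f ∧
      3 * Fintype.card G ≤
        2 * Nat.card {p : G × AddChar G ℂ //
          ∑ g : G, (p.2 g * f (g - p.1)) * (starRingEnd ℂ) ((starRingEnd ℂ) (f g)) = 0} ∧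
      2 * Nat.card {p : G × AddChar G ℂ //
          ∑ g : G, (p.2 g * f (g - p.1)) * (starRingEnd ℂ) ((starRingEnd ℂ) (f g)) ≠ 0} ≤
        2 * (Fintype.card G) ^ 2 - 3 * Fintype.card G := by
  classical
  obtain ⟨e⟩ := hK
  have hsum : ∀ p : G × AddChar G ℂ,
      ∑ g : G, (p.2 g * f (g - p.1)) * (starRingEnd ℂ) ((starRingEnd ℂ) (f g)) =
        timeFreqShift p f ⬝ᵥ f := fun p => by simp [timeFreqShift, dotProduct]
  simp only [hsum, ne_eq, Nat.card_eq_fintype_card, Fintype.card_subtype]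
  have hlow := three_mul_card_le_two_mul_card_timeFreqShift_orthogonal e f
  have htotal := card_filter_add_card_filter_not (s := univ)
    fun p : G × AddChar G ℂ => timeFreqShift p f ⬝ᵥ f = 0
  rw [card_univ, Fintype.card_prod, AddChar.card_eq, ← sq] at htotal
  exact ⟨not_gaborFullSpark_of_card_le (by omega), hlow, by omega⟩
end

section
/- Let p be a prime and G = ℤ/pℤ × ℤ/pℤ. Then for every window z ∈ ℂ^G, the Gabor frame (z, G × Ĝ) is spark deficient; i.e., there is no full spark Gabor frame over ℤ/pℤ × ℤ/pℤ. -/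
section Aux

variable {G : Type*} [Fintype G] [DecidableEq G]

/-- The bilinear pairing against a fixed weight `w`. -/
noncomputable def pairingFun (w : G → ℂ) : (G → ℂ) →ₗ[ℂ] ℂ where
  toFun v := ∑ g, v g * w g
  map_add' v₁ v₂ := by simp [add_mul, Finset.sum_add_distrib]
  map_smul' c v := by simp [Finset.mul_sum, mul_assoc]

lemma pairingFun_ne_zero {w : G → ℂ} (hw : w ≠ 0) : pairingFun w ≠ 0 := by
  obtain ⟨g₀, hg₀⟩ : ∃ g, w g ≠ 0 := by
    by_contra h
    push_neg at h
    exact hw (funext h)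
  intro h
  have := congrFun (congrArg (fun φ : (G → ℂ) →ₗ[ℂ] ℂ => (φ : (G → ℂ) → ℂ))
    h) (fun g => if g = g₀ then 1 else 0)
  simp only [pairingFun, LinearMap.coe_mk, AddHom.coe_mk, LinearMap.zero_apply] at this
  rw [Finset.sum_eq_single g₀ (by intro b _ hb; simp [hb]) (by simp)] at this
  simp at this
  exact hg₀ this

omit [DecidableEq G] in
/-- If `|ι| = dim` many vectors all lie in the kernel of a nonzero linear functional,
they are linearly dependent. -/
lemma not_linearIndependent_of_pairing_eq_zero {ι : Type*} [Fintype ι]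
    (v : ι → (G → ℂ)) (φ : (G → ℂ) →ₗ[ℂ] ℂ) (hφ : φ ≠ 0)
    (hker : ∀ i, φ (v i) = 0) (hcard : Fintype.card ι = Fintype.card G) :
    ¬ LinearIndependent ℂ v := by
  intro hli
  have hcard' : Fintype.card ι = Module.finrank ℂ (G → ℂ) := by
    rw [hcard, Module.finrank_fintype_fun_eq_card]
  have hspan : Submodule.span ℂ (Set.range v) = ⊤ :=
    hli.span_eq_top_of_card_eq_finrank' hcard'
  apply hφ
  refine LinearMap.ext fun x => ?_
  have hx : x ∈ Submodule.span ℂ (Set.range v) := hspan ▸ Submodule.mem_top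
  refine Submodule.span_induction ?_ (by simp) ?_ ?_ hx
  · rintro _ ⟨i, rfl⟩; exact hker i
  · intro a b _ _ ha hb; simp [ha, hb]
  · intro c a _ ha; simp [ha]

end Aux

/-- There is no full spark Gabor frame over `ℤ/pℤ × ℤ/pℤ` for `p` prime. -/
theorem no_fullSpark_gabor_over_zmod_p_sq (p : ℕ) [Fact p.Prime]
    (z : (ZMod p × ZMod p) → ℂ) : ¬ GaborFullSpark z := by
  intro hfs
  have hp : p.Prime := Fact.out
  haveI : NeZero p := ⟨hp.ne_zero⟩
  haveI : Fact (1 < p) := ⟨hp.one_lt⟩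
  set ψ : AddChar (ZMod p) ℂ := ZMod.stdAddChar with hψ
  set M : Matrix (ZMod p) (ZMod p) ℂ := Matrix.of (fun j k => z (j, k)) with hM
  by_cases hdet : M.det = 0
  · -- singular case: a vector orthogonal to all columns
    obtain ⟨u, hu, huM⟩ := Matrix.exists_vecMul_eq_zero_iff.mpr hdet
    set χ : ZMod p → AddChar (ZMod p × ZMod p) ℂ :=
      fun n => (ψ.mulShift n).compAddMonoidHom (AddMonoidHom.snd (ZMod p) (ZMod p)) with hχ
    have hχinj : Function.Injective χ := by
      intro n n' h
      have h1 := DFunLike.congr_fun h ((0 : ZMod p), (1 : ZMod p))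
      simp only [hχ, AddChar.compAddMonoidHom_apply, AddMonoidHom.coe_snd,
        AddChar.mulShift_apply, mul_one] at h1
      exact ZMod.injective_stdAddChar h1
    set F : ZMod p × ZMod p → (ZMod p × ZMod p) × AddChar (ZMod p × ZMod p) ℂ :=
      fun q => (((0 : ZMod p), q.1), χ q.2) with hF
    have hFinj : Function.Injective F := by
      rintro ⟨t, n⟩ ⟨t', n'⟩ h
      simp only [hF, Prod.mk.injEq] at h
      exact Prod.ext h.1.2 (hχinj h.2)
    set Λ : Finset ((ZMod p × ZMod p) × AddChar (ZMod p × ZMod p) ℂ) :=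
      Finset.image F Finset.univ with hΛ
    have hcard : Λ.card = Fintype.card (ZMod p × ZMod p) := by
      rw [hΛ, Finset.card_image_of_injective _ hFinj, Finset.card_univ]
    set w : ZMod p × ZMod p → ℂ := fun g => if g.2 = 0 then u g.1 else 0 with hw
    have hwne : w ≠ 0 := by
      obtain ⟨j, hj⟩ : ∃ j, u j ≠ 0 := by
        by_contra h; push_neg at h; exact hu (funext h)
      intro h
      have := congrFun h (j, (0 : ZMod p))
      simp [hw] at this
      exact hj this
    refine not_linearIndependent_of_pairing_eq_zero _ (pairingFun w)
      (pairingFun_ne_zero hwne) ?_ (by rw [Fintype.card_coe, hcard]) (hfs Λ hcard)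
    rintro ⟨i, hi⟩
    obtain ⟨⟨t, n⟩, -, rfl⟩ := Finset.mem_image.mp hi
    simp only [pairingFun, LinearMap.coe_mk, AddHom.coe_mk, timeFreqShift, hF]
    rw [Fintype.sum_prod_type]
    have hinner : ∀ j : ZMod p,
        (∑ k : ZMod p, χ n (j, k) * z ((j, k) - (0, t)) * w (j, k)) = u j * z (j, -t) := by
      intro j
      rw [Finset.sum_eq_single (0 : ZMod p)]
      · simp only [hw, if_pos rfl, hχ, AddChar.compAddMonoidHom_apply, AddMonoidHom.coe_snd,
          AddChar.mulShift_apply, mul_zero, AddChar.map_zero_eq_one, Prod.mk_sub_mk, sub_zero,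
          zero_sub, one_mul]
        ring
      · intro k _ hk
        simp [hw, hk]
      · intro h; exact absurd (Finset.mem_univ _) h
    calc (∑ j : ZMod p, ∑ k : ZMod p, χ n (j, k) * z ((j, k) - (0, t)) * w (j, k))
        = ∑ j : ZMod p, u j * z (j, -t) := Finset.sum_congr rfl (fun j _ => hinner j)
      _ = Matrix.vecMul u M (-t) := by
            simp [Matrix.vecMul, dotProduct, hM]
      _ = 0 := by rw [huM]; rfl
  · -- nonsingular case: use the adjugate
    set A : Matrix (ZMod p) (ZMod p) ℂ := M.adjugate with hA
    set w : ZMod p × ZMod p → ℂ := fun g => A g.2 g.1 with hw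
    have hwne : w ≠ 0 := by
      intro h
      apply hdet
      have hA0 : A = 0 := by
        ext k j; exact congrFun h (j, k)
      have := Matrix.mul_adjugate M
      rw [← hA, hA0, Matrix.mul_zero] at this
      have := congrFun (congrFun this.symm 0) 0
      simpa using this
    set χ : ZMod p → AddChar (ZMod p × ZMod p) ℂ :=
      fun m => (ψ.mulShift m).compAddMonoidHom (AddMonoidHom.fst (ZMod p) (ZMod p)) with hχ
    have hχinj : Function.Injective χ := by
      intro n n' h
      have h1 := DFunLike.congr_fun h ((1 : ZMod p), (0 : ZMod p))
      simp only [hχ, AddChar.compAddMonoidHom_apply, AddMonoidHom.coe_fst,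
        AddChar.mulShift_apply, mul_one] at h1
      exact ZMod.injective_stdAddChar h1
    set F : ZMod p × ZMod p → (ZMod p × ZMod p) × AddChar (ZMod p × ZMod p) ℂ :=
      fun q => ((q.1, (0 : ZMod p)), χ q.2) with hF
    have hFinj : Function.Injective F := by
      rintro ⟨s, m⟩ ⟨s', m'⟩ h
      simp only [hF, Prod.mk.injEq] at h
      exact Prod.ext h.1.1 (hχinj h.2)
    set extra : (ZMod p × ZMod p) × AddChar (ZMod p × ZMod p) ℂ :=
      (((0 : ZMod p), (1 : ZMod p)), (1 : AddChar (ZMod p × ZMod p) ℂ)) with hextra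
    set Λ : Finset ((ZMod p × ZMod p) × AddChar (ZMod p × ZMod p) ℂ) :=
      insert extra (Finset.image F (Finset.univ.erase ((0 : ZMod p), (0 : ZMod p)))) with hΛ
    have hextra_notmem : extra ∉ Finset.image F (Finset.univ.erase ((0 : ZMod p), (0 : ZMod p))) := by
      intro h
      obtain ⟨⟨s, m⟩, -, habs⟩ := Finset.mem_image.mp h
      have : ((0 : ZMod p) : ZMod p) = 1 := congrArg (fun q => q.1.2) habs
      exact one_ne_zero this.symm
    have hcard : Λ.card = Fintype.card (ZMod p × ZMod p) := by
      rw [hΛ, Finset.card_insert_of_notMem hextra_notmem,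
        Finset.card_image_of_injective _ hFinj, Finset.card_erase_of_mem (Finset.mem_univ _),
        Finset.card_univ]
      have : 1 ≤ Fintype.card (ZMod p × ZMod p) := Fintype.card_pos
      omega
    -- the key matrix identities
    have hMA : M * A = M.det • (1 : Matrix (ZMod p) (ZMod p) ℂ) := Matrix.mul_adjugate M
    have hAM : A * M = M.det • (1 : Matrix (ZMod p) (ZMod p) ℂ) := Matrix.adjugate_mul M
    refine not_linearIndependent_of_pairing_eq_zero _ (pairingFun w)
      (pairingFun_ne_zero hwne) ?_ (by rw [Fintype.card_coe, hcard]) (hfs Λ hcard)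
    rintro ⟨i, hi⟩
    rcases Finset.mem_insert.mp hi with hi' | hi'
    · -- the extra pair ((0,1), trivial character)
      subst hi'
      simp only [pairingFun, LinearMap.coe_mk, AddHom.coe_mk, timeFreqShift, hextra,
        AddChar.one_apply, one_mul]
      rw [Fintype.sum_prod_type, Finset.sum_comm]
      have hinner : ∀ k : ZMod p,
          (∑ j : ZMod p, z ((j, k) - (0, 1)) * w (j, k)) = 0 := by
        intro k
        have h1 : (∑ j : ZMod p, z ((j, k) - (0, 1)) * w (j, k)) = (A * M) k (k - 1) := by
          rw [Matrix.mul_apply]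
          refine Finset.sum_congr rfl (fun j _ => ?_)
          simp only [hw, hM, Prod.mk_sub_mk, sub_zero, Matrix.of_apply]
          ring
        rw [h1, hAM, Matrix.smul_apply, Matrix.one_apply_ne, smul_zero]
        intro h
        have : (1 : ZMod p) = 0 := by linear_combination h
        exact one_ne_zero this
      exact Finset.sum_eq_zero (fun k _ => hinner k)
    · -- a pair ((s,0), χ m) with (s,m) ≠ (0,0)
      obtain ⟨⟨s, m⟩, hsm, rfl⟩ := Finset.mem_image.mp hi'
      have hsm0 : (s, m) ≠ ((0 : ZMod p), (0 : ZMod p)) := (Finset.mem_erase.mp hsm).1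
      simp only [pairingFun, LinearMap.coe_mk, AddHom.coe_mk, timeFreqShift, hF]
      rw [Fintype.sum_prod_type]
      have hinner : ∀ j : ZMod p,
          (∑ k : ZMod p, χ m (j, k) * z ((j, k) - (s, 0)) * w (j, k))
            = ψ (m * j) * ((M * A) (j - s) j) := by
        intro j
        rw [Matrix.mul_apply, Finset.mul_sum]
        refine Finset.sum_congr rfl (fun k _ => ?_)
        simp only [hχ, hw, hM, AddChar.compAddMonoidHom_apply, AddMonoidHom.coe_fst,
          AddChar.mulShift_apply, Prod.mk_sub_mk, sub_zero, Matrix.of_apply]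
        ring
      rw [Finset.sum_congr rfl (fun j _ => hinner j)]
      by_cases hs : s = 0
      · have hm : m ≠ 0 := by
          intro hm0; exact hsm0 (by rw [hs, hm0])
        subst hs
        have hsum0 : (∑ j : ZMod p, ψ (m * j)) = 0 := by
          have : (∑ j : ZMod p, ψ.mulShift m j) = 0 :=
            AddChar.sum_eq_zero_of_ne_one (ZMod.isPrimitive_stdAddChar p hm)
          simpa only [AddChar.mulShift_apply] using this
        have : ∀ j : ZMod p, ψ (m * j) * ((M * A) (j - 0) j) = M.det * ψ (m * j) := by
          intro j
          rw [sub_zero, hMA, Matrix.smul_apply, Matrix.one_apply_eq, smul_eq_mul, mul_one]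
          ring
        rw [Finset.sum_congr rfl (fun j _ => this j), ← Finset.mul_sum, hsum0, mul_zero]
      · refine Finset.sum_eq_zero (fun j _ => ?_)
        rw [hMA, Matrix.smul_apply, Matrix.one_apply_ne, smul_zero, mul_zero]
        intro h
        exact hs (by linear_combination -h)
end

section
/- There is no finite abelian non-cyclic group G for which some window f ∈ ℂ^G generates a full spark Gabor frame: for every finite abelian non-cyclic G and every f ∈ ℂ^G, the Gabor frame (f, G × Ĝ) is spark deficient. -/
open Finset Function Matrix

theorem GaborFullSpark.linearIndependent {G : Type*} [AddCommGroup G] [Fintype G] {f : G → ℂ}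
    (hf : GaborFullSpark f) {ι : Type*} [Fintype ι] {Θ : ι → G × AddChar G ℂ}
    (hΘ : Injective Θ) (hcard : Fintype.card ι = Fintype.card G) :
    LinearIndependent ℂ (fun i => timeFreqShift (Θ i) f) :=
  (hf (univ.map ⟨Θ, hΘ⟩) (by simpa using hcard)).comp (fun i => ⟨Θ i, by simp⟩)
    fun _ _ h => hΘ (congrArg Subtype.val h)

/-- Restrictions of characters of `G` span all functions on `V` (extend by zero), so by linear
independence of characters every character of `V` is among them. -/
theorem AddChar.compAddMonoidHom_surjective {V G : Type*} [AddCommGroup V] [Finite V]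
    [AddCommGroup G] [Finite G] {ι : V →+ G} (hι : Injective ι) :
    Surjective fun ψ : AddChar G ℂ => ψ.compAddMonoidHom ι := by
  classical
  intro χ
  set R := Set.range fun ψ : AddChar G ℂ => ψ.compAddMonoidHom ι
  have hspan (φ : V → ℂ) : φ ∈ Submodule.span ℂ (complexBasis V '' R) := by
    have hext : extend ι φ 0 ∈ Submodule.span ℂ (Set.range (complexBasis G)) := by
      rw [(complexBasis G).span_eq]; trivial
    have := Submodule.mem_map_of_mem (f := LinearMap.funLeft ℂ ℂ ι) hext
    rw [Submodule.map_span, ← Set.range_comp] at this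
    convert this using 2
    · ext v; simp [R, coe_compAddMonoidHom, LinearMap.funLeft]
    · ext v; simp [LinearMap.funLeft, hι.extend_apply]
  by_contra hχ
  exact (complexBasis V).linearIndependent.notMem_span_image hχ (by simpa using hspan χ)

lemma timeFreqShift_apply_map {V G : Type*} [AddCommGroup V] [AddCommGroup G] (ι : V →+ G)
    (x : V) (ψ : AddChar G ℂ) (f : G → ℂ) (v : V) :
    timeFreqShift (ι x, ψ) f (ι v) = timeFreqShift (x, ψ.compAddMonoidHom ι) (f ∘ ι) v := by
  simp [timeFreqShift, map_sub]

theorem GaborFullSpark.comp {V G : Type*} [AddCommGroup V] [Fintype V] [AddCommGroup G]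
    [Fintype G] {f : G → ℂ} (hf : GaborFullSpark f) {ι : V →+ G} (hι : Injective ι) :
    GaborFullSpark (f ∘ ι) := by
  classical
  intro Λ hΛ
  by_contra hdep
  obtain ⟨g, hg, l₀, hl₀⟩ := Fintype.not_linearIndependent_iff.1 hdep
  let H := ι.range
  let mk := QuotientAddGroup.mk' H
  have hmk (v : V) : mk (ι v) = 0 := (QuotientAddGroup.eq_zero_iff _).2 ⟨v, rfl⟩
  choose lift hlift using AddChar.compAddMonoidHom_surjective (G := G) hι
  have hlift' (χ : AddChar V ℂ) (v : V) : lift χ (ι v) = χ v := DFunLike.congr_fun (hlift χ) v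
  let Θ : Λ × AddChar (G ⧸ H) ℂ → G × AddChar G ℂ :=
    fun q => (ι q.1.1.1, lift q.1.1.2 * q.2.compAddMonoidHom mk)
  have hΘ : Injective Θ := by
    rintro ⟨l, ψ⟩ ⟨l', ψ'⟩ h
    obtain ⟨hx, hψ⟩ := Prod.mk.inj h
    have hl : l = l' := by
      refine Subtype.ext (Prod.ext (hι hx) (AddChar.ext_iff.2 fun v => ?_))
      simpa [AddChar.mul_apply, hmk, hlift'] using DFunLike.congr_fun hψ (ι v)
    subst hl
    exact congrArg _ (AddChar.compAddMonoidHom_injective_left mk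
      (QuotientAddGroup.mk'_surjective H) (mul_left_cancel hψ))
  have hcard : Fintype.card (Λ × AddChar (G ⧸ H) ℂ) = Fintype.card G := by
    rw [Fintype.card_prod, Fintype.card_coe, hΛ, AddChar.card_eq, Fintype.card_eq_nat_card,
      Fintype.card_eq_nat_card, Fintype.card_eq_nat_card,
      H.card_eq_card_quotient_mul_card_addSubgroup, mul_comm,
      ← Nat.card_congr (AddMonoidHom.ofInjective hι).toEquiv]
  refine Fintype.not_linearIndependent_iff.2
    ⟨fun q => g q.1, ?_, ⟨l₀, 0⟩, hl₀⟩ (hf.linearIndependent hΘ hcard)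
  ext y
  have hsplit : (∑ q, g q.1 • timeFreqShift (Θ q) f) y =
      (∑ φ : AddChar (G ⧸ H) ℂ, φ (mk y)) *
        ∑ l : Λ, g l * timeFreqShift (ι l.1.1, lift l.1.2) f y := by
    simp only [Finset.sum_apply, Pi.smul_apply, timeFreqShift, AddChar.mul_apply,
      AddChar.compAddMonoidHom_apply, smul_eq_mul, Fintype.sum_prod_type, mul_sum, sum_mul, Θ]
    exact sum_congr rfl fun _ _ => sum_congr rfl fun _ _ => by ring
  rw [hsplit, Pi.zero_apply]
  by_cases hy : y ∈ H
  · obtain ⟨v, rfl⟩ := hy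
    refine mul_eq_zero_of_right _ ?_
    simpa [timeFreqShift_apply_map, hlift] using congrFun hg v
  · rw [AddChar.sum_apply_eq_zero_iff_ne_zero.2 (by simpa [mk] using hy), zero_mul]

section Torsion

variable {G : Type*} [AddCommGroup G] [Fintype G] [DecidableEq G]

lemma card_nsmul_mul_eq_zero_le (a b : ℕ) :
    #{x : G | (a * b) • x = 0} ≤ #{x : G | b • x = 0} * #{x : G | a • x = 0} := by
  set T : ℕ → Finset G := fun n => {x | n • x = 0}
  calc #(T (a * b)) ≤ #(T b) * #((T (a * b)).image (b • ·)) :=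
        card_le_mul_card_image _ _ fun y hy => ?_
    _ ≤ #(T b) * #(T a) := Nat.mul_le_mul_left _ (card_le_card fun y hy => ?_)
  · obtain ⟨x₀, -, rfl⟩ := mem_image.1 hy
    refine card_le_card_of_injOn (· - x₀) (fun x hx => ?_) fun x _ x' _ h => sub_left_injective h
    simp_all [T, smul_sub]
  · obtain ⟨x, hx, rfl⟩ := mem_image.1 hy
    simp_all [T, smul_smul, mul_comm a b]

lemma exists_prime_lt_card_nsmul_eq_zero (hG : ¬ IsAddCyclic G) :
    ∃ p, p.Prime ∧ p < #{x : G | p • x = 0} := by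
  by_contra! h
  refine hG (isAddCyclic_of_card_nsmul_eq_zero_le fun n hn => ?_)
  induction n using Nat.recOnMul with
  | zero => omega
  | one => simp [filter_eq']
  | prime p hp => exact h p hp
  | mul a b iha ihb =>
    calc #{x : G | (a * b) • x = 0} ≤ #{x : G | b • x = 0} * #{x : G | a • x = 0} :=
          card_nsmul_mul_eq_zero_le a b
      _ ≤ b * a := Nat.mul_le_mul (ihb (Nat.pos_of_mul_pos_left hn))
          (iha (Nat.pos_of_mul_pos_right hn))
      _ = a * b := mul_comm b a

lemma exists_zmod_prod_addMonoidHom_injective {p : ℕ} [Fact p.Prime]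
    (hp : p < #{x : G | p • x = 0}) : ∃ ι : ZMod p × ZMod p →+ G, Injective ι := by
  let T := (nsmulAddMonoidHom (α := G) p).ker
  have : Module (ZMod p) T := AddCommGroup.zmodModule fun x => Subtype.ext x.2
  have hcard : p < Fintype.card T := by
    convert hp using 1
    rw [Fintype.card_subtype]
    congr 1
    ext x
    simp [T]
  have : Nontrivial T :=
    Fintype.one_lt_card_iff_nontrivial.1 ((Fact.out : p.Prime).one_lt.trans hcard)
  obtain ⟨x, hx⟩ := exists_ne (0 : T)
  obtain ⟨y, hy⟩ : ∃ y : T, ∀ a : ZMod p, a • x ≠ y := by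
    by_contra! h
    have := Fintype.card_le_of_surjective _ h
    rw [ZMod.card] at this
    omega
  have hxy := (LinearIndependent.pair_iff' hx).2 hy
  let ι₀ : ZMod p × ZMod p →ₗ[ZMod p] T :=
    (LinearMap.toSpanSingleton _ _ x).coprod (LinearMap.toSpanSingleton _ _ y)
  have hι₀ : Injective ι₀ := by
    rw [injective_iff_map_eq_zero]
    rintro ⟨s, t⟩ hst
    obtain ⟨rfl, rfl⟩ := LinearIndependent.pair_iff.1 hxy s t hst
    rfl
  exact ⟨T.subtype.comp ι₀.toAddMonoidHom, Subtype.val_injective.comp hι₀⟩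

end Torsion

lemma Matrix.exists_trace_eq_zero_mul_add_smul_mul_diagonal_eq_zero {m K : Type*} [Fintype m]
    [DecidableEq m] [Nontrivial m] [Field K] (F : Matrix m m K) {d : m → K} (hd : ∑ i, d i = 0) :
    ∃ (A : Matrix m m K) (e : K), (A ≠ 0 ∨ e ≠ 0) ∧ A.trace = 0 ∧
      A * F + e • (F * diagonal d) = 0 := by
  by_cases hF : IsUnit F.det
  · refine ⟨-(F * diagonal d * F⁻¹), 1, Or.inr one_ne_zero, ?_, ?_⟩
    · rw [trace_neg, trace_mul_comm, ← Matrix.mul_assoc, nonsing_inv_mul _ hF, Matrix.one_mul,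
        trace_diagonal, hd, neg_zero]
    · rw [neg_mul, Matrix.mul_assoc, nonsing_inv_mul _ hF, Matrix.mul_one, one_smul,
        neg_add_cancel]
  · obtain ⟨v, hv, hvF⟩ := exists_vecMul_eq_zero_iff.2 (by simpa using hF)
    obtain ⟨u, hu, hvu⟩ := exists_ne_zero_dotProduct_eq_zero v
    refine ⟨vecMulVec u v, 0, Or.inl (by simp [hu, hv]), ?_, ?_⟩
    · rw [trace_vecMulVec, hvu]
    · simp [vecMulVec_mul, hvF]

namespace ZMod

variable {n : ℕ} [NeZero n]

lemma sum_dft_mul_stdAddChar (Φ : ZMod n → ℂ) (t : ZMod n) :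
    ∑ c, 𝓕 Φ c * stdAddChar (c * t) = n * Φ t := by
  have h := invDFT_apply (𝓕 Φ) t
  rw [LinearEquiv.symm_apply_apply] at h
  rw [h, smul_eq_mul, ← mul_assoc, mul_inv_cancel₀ (NeZero.ne (n : ℂ)), one_mul]
  simp [mul_comm]

lemma sum_stdAddChar_eq_zero [Nontrivial (ZMod n)] : ∑ b : ZMod n, stdAddChar b = 0 := by
  refine AddChar.sum_eq_zero_iff_ne_zero.2 fun h => one_ne_zero (injective_stdAddChar (N := n) ?_)
  rw [h, AddChar.zero_apply, AddChar.zero_apply]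

noncomputable def prodSndChar (c : ZMod n) : AddChar (ZMod n × ZMod n) ℂ :=
  (stdAddChar.mulShift c).compAddMonoidHom (AddMonoidHom.snd _ _)

noncomputable def prodFstChar : AddChar (ZMod n × ZMod n) ℂ :=
  stdAddChar.compAddMonoidHom (AddMonoidHom.fst _ _)

@[simp] lemma prodSndChar_apply (c : ZMod n) (x : ZMod n × ZMod n) :
    prodSndChar c x = stdAddChar (c * x.2) := rfl

@[simp] lemma prodFstChar_apply (x : ZMod n × ZMod n) : prodFstChar x = stdAddChar x.1 := rfl

lemma prodSndChar_injective : Injective (prodSndChar (n := n)) := fun _ _ h =>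
  injective_stdAddChar (by simpa using DFunLike.congr_fun h (0, 1))

lemma prodFstChar_ne_prodSndChar [Nontrivial (ZMod n)] (c : ZMod n) :
    prodFstChar ≠ prodSndChar c := fun h =>
  one_ne_zero <| injective_stdAddChar (N := n) <| by simpa using DFunLike.congr_fun h (1, 0)

noncomputable def deficientPoint (i : ZMod n × ZMod n) :
    (ZMod n × ZMod n) × AddChar (ZMod n × ZMod n) ℂ :=
  ((0, i.1), if i = 0 then prodFstChar else prodSndChar i.2)

lemma deficientPoint_injective [Nontrivial (ZMod n)] : Injective (deficientPoint (n := n)) := by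
  intro i i' h
  obtain ⟨h₁, h₂⟩ := Prod.mk.inj h
  have hj : i.1 = i'.1 := (Prod.mk.inj h₁).2
  split_ifs at h₂ with hi hi'
  · rw [hi, hi']
  · exact absurd h₂ (prodFstChar_ne_prodSndChar _)
  · exact absurd h₂.symm (prodFstChar_ne_prodSndChar _)
  · exact Prod.ext hj (prodSndChar_injective h₂)

/-- At `0` the Fourier coefficient would be `A.trace`, which vanishes for the matrices used, so
that slot carries the weight of the vector `F * diagonal e` instead. -/
noncomputable def deficientCoeff (A : Matrix (ZMod n) (ZMod n) ℂ) (e : ℂ)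
    (i : ZMod n × ZMod n) : ℂ :=
  if i = 0 then n * e else 𝓕 (fun s => A s (s - i.1)) i.2

lemma dft_diag_apply_zero (A : Matrix (ZMod n) (ZMod n) ℂ) :
    𝓕 (fun s => A s s) 0 = A.trace := by
  simp [dft_apply_zero, trace]

lemma sum_dft_mul_timeFreqShift (A : Matrix (ZMod n) (ZMod n) ℂ)
    (w : ZMod n × ZMod n → ℂ) (b t : ZMod n) :
    ∑ i : ZMod n × ZMod n, 𝓕 (fun s => A s (s - i.1)) i.2 *
        timeFreqShift ((0, i.1), prodSndChar i.2) w (b, t) =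
      n * (A * of fun t b => w (b, t)) t b := by
  calc _ = ∑ j, (∑ c, 𝓕 (fun s => A s (s - j)) c * stdAddChar (c * t)) * w (b, t - j) := by
        simp [timeFreqShift, Fintype.sum_prod_type, sum_mul, mul_assoc]
    _ = n * ∑ j, A t (t - j) * w (b, t - j) := by
        simp_rw [sum_dft_mul_stdAddChar, mul_sum, mul_assoc]
    _ = n * (A * of fun t b => w (b, t)) t b := by
        rw [mul_apply]
        congr 1
        exact Fintype.sum_equiv (Equiv.subLeft t) _ _ fun _ => rfl

lemma sum_deficientCoeff_smul_timeFreqShift {A : Matrix (ZMod n) (ZMod n) ℂ} {e : ℂ}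
    {w : ZMod n × ZMod n → ℂ} (hA : A.trace = 0)
    (hAF : A * of (fun t b => w (b, t)) +
      e • (of (fun t b => w (b, t)) * diagonal stdAddChar) = 0) :
    ∑ i, deficientCoeff A e i • timeFreqShift (deficientPoint i) w = 0 := by
  ext ⟨b, t⟩
  have hterm (i : ZMod n × ZMod n) :
      deficientCoeff A e i * timeFreqShift (deficientPoint i) w (b, t) =
        𝓕 (fun s => A s (s - i.1)) i.2 * timeFreqShift ((0, i.1), prodSndChar i.2) w (b, t) +
          if i = 0 then n * e * (stdAddChar b * w (b, t)) else 0 := by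
    rcases eq_or_ne i 0 with rfl | hi
    · simp [deficientCoeff, deficientPoint, dft_diag_apply_zero, hA, timeFreqShift]
    · simp [deficientCoeff, deficientPoint, hi]
  have hbt := congrFun (congrFun hAF t) b
  simp only [Matrix.add_apply, Matrix.smul_apply, mul_diagonal, of_apply, smul_eq_mul,
    Matrix.zero_apply] at hbt
  simp only [Finset.sum_apply, Pi.smul_apply, smul_eq_mul, hterm, sum_add_distrib, sum_ite_eq',
    mem_univ, if_true, sum_dft_mul_timeFreqShift, Pi.zero_apply]
  linear_combination (n : ℂ) * hbt

lemma deficientCoeff_ne_zero {A : Matrix (ZMod n) (ZMod n) ℂ} {e : ℂ} (hAe : A ≠ 0 ∨ e ≠ 0)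
    (hA : A.trace = 0) : deficientCoeff A e ≠ 0 := by
  intro h
  have he : e = 0 := by simpa [deficientCoeff, NeZero.ne] using congrFun h 0
  refine hAe.elim (fun hA0 => hA0 ?_) (fun he0 => he0 he)
  ext t s
  have hΦ : (fun s' => A s' (s' - (t - s))) = 0 := by
    refine (LinearEquiv.map_eq_zero_iff 𝓕).1 (funext fun c => ?_)
    rcases eq_or_ne (t - s, c) 0 with h0 | h0
    · simp_all [Prod.ext_iff, dft_diag_apply_zero]
    · simpa [deficientCoeff, h0] using congrFun h (t - s, c)
  simpa using congrFun hΦ t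

theorem not_gaborFullSpark_prod [Nontrivial (ZMod n)] (w : ZMod n × ZMod n → ℂ) :
    ¬ GaborFullSpark w := by
  obtain ⟨A, e, hAe, hA, hAF⟩ :=
    (of fun t b => w (b, t)).exists_trace_eq_zero_mul_add_smul_mul_diagonal_eq_zero
      sum_stdAddChar_eq_zero
  intro hf
  exact Fintype.not_linearIndependent_iff.2 ⟨deficientCoeff A e,
    sum_deficientCoeff_smul_timeFreqShift hA hAF, Function.ne_iff.1 (deficientCoeff_ne_zero hAe hA)⟩
    (GaborFullSpark.linearIndependent hf deficientPoint_injective (by simp))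

end ZMod

/-- For every finite abelian non-cyclic group `G` and every window `f : G → ℂ`,
the Gabor frame `(f, G × Ĝ)` is spark deficient. -/
theorem no_fullSpark_gabor_noncyclic {G : Type*} [AddCommGroup G] [Fintype G]
    (hG : ¬ IsAddCyclic G) (f : G → ℂ) : ¬ GaborFullSpark f := by
  classical
  obtain ⟨p, hp, hpT⟩ := exists_prime_lt_card_nsmul_eq_zero hG
  have : Fact p.Prime := ⟨hp⟩
  obtain ⟨ι, hι⟩ := exists_zmod_prod_addMonoidHom_injective hpT
  exact fun hf => ZMod.not_gaborFullSpark_prod (f ∘ ι) (hf.comp hι)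
end

section
/- Let p be an odd prime, N = p^r, and F ∈ SL(2, ℤ/Nℤ) with F = I + (N/p)·D where D ≢ 0 mod p. Then the set of vectors x ∈ (ℤ/Nℤ)² fixed by F has cardinality at most p^{2r−1}; consequently the number of x ∈ (ℤ/Nℤ)² with F·x ≠ x is at least N·φ(N) = p^{2r} − p^{2r−1}. -/
/-- Let `p` be an odd prime, `N = p^r`, and `F = I + p^{r-1}·D ∈ SL(2, ℤ/Nℤ)`
with `D ≢ 0 (mod p)`. Then the set of fixed vectors of `F` in `(ℤ/Nℤ)²` has
cardinality at most `p^{2r-1}`, so at least `N·φ(N) = p^{2r} - p^{2r-1}` vectors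
are moved by `F`. -/
theorem fixed_points_card_le (p r : ℕ) (hp : p.Prime) (hodd : Odd p)
    (hr : 1 ≤ r)
    (F D : Matrix (Fin 2) (Fin 2) (ZMod (p ^ r)))
    (hdet : F.det = 1)
    (hF : F = 1 + ((p : ZMod (p ^ r)) ^ (r - 1)) • D)
    (hD : ∃ i j, ZMod.castHom (dvd_pow_self p (by omega : r ≠ 0)) (ZMod p)
        (D i j) ≠ 0) :
    Nat.card {x : Fin 2 → ZMod (p ^ r) // F.mulVec x = x} ≤ p ^ (2 * r - 1) ∧
      p ^ (2 * r) - p ^ (2 * r - 1) ≤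
        Nat.card {x : Fin 2 → ZMod (p ^ r) // F.mulVec x ≠ x} := by
  classical
  have hp0 : p ≠ 0 := hp.pos.ne'
  haveI : NeZero (p ^ r) := ⟨pow_ne_zero r hp0⟩
  haveI : NeZero p := ⟨hp0⟩
  set π := ZMod.castHom (dvd_pow_self p (show r ≠ 0 by omega)) (ZMod p) with hπdef
  -- π z = 0 ↔ p ∣ z.val
  have hπ : ∀ z : ZMod (p ^ r), π z = 0 ↔ p ∣ z.val := by
    intro z
    conv_lhs => rw [← ZMod.natCast_zmod_val z]
    rw [map_natCast]
    exact ZMod.natCast_eq_zero_iff _ _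
  -- multiplication by p^{r-1} kills exactly multiples of p
  have key : ∀ z : ZMod (p ^ r), (p : ZMod (p ^ r)) ^ (r - 1) * z = 0 ↔ π z = 0 := by
    intro z
    rw [hπ]
    conv_lhs => rw [← ZMod.natCast_zmod_val z]
    rw [show ((p : ZMod (p ^ r)) ^ (r - 1) * (z.val : ZMod (p ^ r)))
        = ((p ^ (r - 1) * z.val : ℕ) : ZMod (p ^ r)) by push_cast; ring]
    rw [ZMod.natCast_eq_zero_iff]
    constructor
    · intro h
      have hpr : p ^ r = p ^ (r - 1) * p := by
        rw [← pow_succ]; congr 1; omega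
      have h2 : p ^ (r - 1) * p ∣ p ^ (r - 1) * z.val := by rw [← hpr]; exact h
      exact (mul_dvd_mul_iff_left (a := p ^ (r - 1))
        (pow_ne_zero _ hp0)).mp h2
    · intro h
      obtain ⟨k, hk⟩ := h
      refine ⟨k, ?_⟩
      rw [hk]
      rw [show p ^ r = p ^ (r - 1) * p by rw [← pow_succ]; congr 1; omega]
      ring
  obtain ⟨i, j, hij⟩ := hD
  -- fixed vectors satisfy π (D.mulVec x i) = 0
  have hfix : ∀ x : Fin 2 → ZMod (p ^ r), F.mulVec x = x → π (D.mulVec x i) = 0 := by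
    intro x hx
    rw [hF, Matrix.add_mulVec, Matrix.one_mulVec, Matrix.smul_mulVec] at hx
    have h0 : ((p : ZMod (p ^ r)) ^ (r - 1)) • D.mulVec x = 0 := by
      have := congrArg (fun v => v - x) hx
      simpa using this
    have := congrFun h0 i
    simp only [Pi.smul_apply, smul_eq_mul, Pi.zero_apply] at this
    exact (key _).mp this
  -- D i j is a unit
  have hu : IsUnit (D i j) := by
    have hnd : ¬ p ∣ (D i j).val := by
      intro h
      exact hij ((hπ _).mpr h)
    rw [← ZMod.natCast_zmod_val (D i j)]
    rw [ZMod.isUnit_iff_coprime]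
    exact Nat.Coprime.pow_right r ((hp.coprime_iff_not_dvd.mpr hnd).symm)
  -- injection from fixed vectors
  let g : {x : Fin 2 → ZMod (p ^ r) // F.mulVec x = x} →
      {z : ZMod (p ^ r) // π z = 0} × ZMod (p ^ r) :=
    fun x => (⟨D.mulVec x.1 i, hfix x.1 x.2⟩, x.1 (j + 1))
  have hginj : Function.Injective g := by
    rintro ⟨x, hx⟩ ⟨y, hy⟩ hxy
    simp only [g, Prod.mk.injEq, Subtype.mk.injEq] at hxy
    obtain ⟨h1, h2⟩ := hxy
    simp only [Matrix.mulVec, dotProduct, Fin.sum_univ_two] at h1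
    have hj : x j = y j := by
      fin_cases j
      · simp only [Fin.isValue] at h2 ⊢
        have h2' : x 1 = y 1 := by simpa using h2
        rw [h2'] at h1
        have := add_right_cancel h1
        exact hu.mul_left_cancel this
      · simp only [Fin.isValue] at h2 ⊢
        have h2' : x 0 = y 0 := by simpa using h2
        rw [h2'] at h1
        have : D i 1 * x 1 = D i 1 * y 1 := by
          have := congrArg (fun t => t - D i 0 * x 0) h1
          simpa [add_comm, add_sub_cancel] using this
        exact hu.mul_left_cancel this
    have hj1 : x (j + 1) = y (j + 1) := h2
    refine Subtype.ext (funext fun k => ?_)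
    fin_cases j <;> fin_cases k <;> simp_all
  -- kernel of π has at most p^{r-1} elements
  have hker : Nat.card {z : ZMod (p ^ r) // π z = 0} ≤ p ^ (r - 1) := by
    have hinj : Function.Injective
        (fun z : {z : ZMod (p ^ r) // π z = 0} =>
          (⟨z.1.val / p, by
            rw [Nat.div_lt_iff_lt_mul hp.pos, ← pow_succ,
              show r - 1 + 1 = r by omega]
            exact ZMod.val_lt _⟩ : Fin (p ^ (r - 1)))) := by
      rintro ⟨z, hz⟩ ⟨w, hw⟩ h
      simp only [Fin.mk.injEq] at h
      have hdz : p ∣ z.val := (hπ z).mp hz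
      have hdw : p ∣ w.val := (hπ w).mp hw
      have : z.val = w.val := by
        rw [← Nat.div_mul_cancel hdz, ← Nat.div_mul_cancel hdw, h]
      refine Subtype.ext (ZMod.val_injective _ this)
    calc Nat.card {z : ZMod (p ^ r) // π z = 0}
        ≤ Nat.card (Fin (p ^ (r - 1))) := Nat.card_le_card_of_injective _ hinj
      _ = p ^ (r - 1) := by simp
  -- first bound
  have h1 : Nat.card {x : Fin 2 → ZMod (p ^ r) // F.mulVec x = x} ≤ p ^ (2 * r - 1) := by
    calc Nat.card {x : Fin 2 → ZMod (p ^ r) // F.mulVec x = x}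
        ≤ Nat.card ({z : ZMod (p ^ r) // π z = 0} × ZMod (p ^ r)) :=
          Nat.card_le_card_of_injective g hginj
      _ = Nat.card {z : ZMod (p ^ r) // π z = 0} * Nat.card (ZMod (p ^ r)) :=
          Nat.card_prod _ _
      _ ≤ p ^ (r - 1) * p ^ r := by
          rw [Nat.card_zmod]
          exact Nat.mul_le_mul_right _ hker
      _ = p ^ (2 * r - 1) := by rw [← pow_add]; congr 1; omega
  refine ⟨h1, ?_⟩
  -- total count
  have htot : Fintype.card (Fin 2 → ZMod (p ^ r)) = p ^ (2 * r) := by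
    rw [Fintype.card_fun, ZMod.card, Fintype.card_fin, ← pow_mul]
    congr 1; omega
  have hcompl : Nat.card {x : Fin 2 → ZMod (p ^ r) // F.mulVec x ≠ x}
      = p ^ (2 * r) - Nat.card {x : Fin 2 → ZMod (p ^ r) // F.mulVec x = x} := by
    rw [Nat.card_eq_fintype_card, Nat.card_eq_fintype_card, ← htot]
    exact Fintype.card_subtype_compl _
  rw [hcompl]
  exact Nat.sub_le_sub_left h1 _
end

section
/- Let N be an odd positive integer and F ∈ SL(2, ℤ/Nℤ). Call x ∈ (ℤ/Nℤ)² F-full if the points x, Fx, …, F^{n−1}x are pairwise distinct, where n is the order of F. Then the number of F-full points in (ℤ/Nℤ)² is at least N·φ(N). -/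
/-!
A point is full exactly when the only powers of `F` fixing it are trivial. Since such a power
is trivial as soon as its reductions modulo coprime factors are, the Chinese remainder theorem
makes the count supermultiplicative and reduces the theorem to `N = p ^ r`. There it suffices to
put every non-full point in a proper subgroup of `(ℤ/p^rℤ)²`: its index is at least `p`, which
leaves at least `p^(2r) - p^(2r-1) = p^r φ(p^r)` full points.

If `tr(F)² - 4` is a unit, every point with a unit coordinate is full: a power `F^k = αF + β`
fixing it has trace `2`, so `2 (F^k - 1) = α (2F - tr F)`, and `(2F - tr F)² = tr(F)² - 4` is
invertible, which forces `α = 0` and then `F^k = 1`. Otherwise `±F` is unipotent modulo `p`,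
so the order `n` of `F` divides `2p^r`; a non-full point is then fixed by `F^(n/2) = -1`,
hence zero, or by `F^(n/p)`, and the kernel of `F^(n/p) - 1` is a proper subgroup.
-/

/-- A point `x ∈ (ℤ/Nℤ)²` is `F`-full if `x, Fx, …, F^{n-1}x` are pairwise
distinct, where `n = orderOf F`. -/
def IsFull {N : ℕ} (F : Matrix (Fin 2) (Fin 2) (ZMod N))
    (x : Fin 2 → ZMod N) : Prop :=
  Function.Injective fun i : Fin (orderOf F) => (F ^ (i : ℕ)).mulVec x

open Matrix

section Unipotent

variable {A : Type*} [Ring A] {p : ℕ}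

theorem exists_one_add_pow_prime_eq (hp : p.Prime) {U W : A} (hU : U * U = p * W) :
    ∃ c, (1 + U) ^ p = 1 + p * c := by
  obtain ⟨s, hs⟩ := (Commute.one_left U).exists_add_pow_prime_eq hp
  have hUp : U ^ p = p * (U ^ (p - 2) * W) := by
    have : U ^ p = U ^ (p - 2) * (U * U) := by
      rw [← sq, ← pow_add, Nat.sub_add_cancel hp.two_le]
    rw [this, hU, ← mul_assoc, ← Nat.cast_comm, mul_assoc]
  refine ⟨U ^ (p - 2) * W + U * s, ?_⟩
  rw [hs, one_pow, hUp]
  noncomm_ring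

theorem exists_one_add_prime_pow_mul_pow_prime_eq (hp : p.Prime) {k : ℕ} (hk : k ≠ 0) (c : A) :
    ∃ c', (1 + (p : A) ^ k * c) ^ p = 1 + (p : A) ^ (k + 1) * c' := by
  obtain ⟨s, hs⟩ := (Commute.one_left ((p : A) ^ k * c)).exists_add_pow_prime_eq hp
  have hkp : (p : A) ^ (k * p) = p ^ (k + 1) * p ^ (k * p - (k + 1)) := by
    rw [← pow_add]
    congr 1
    have := Nat.mul_le_mul_left k hp.two_le
    omega
  refine ⟨(p : A) ^ (k * p - (k + 1)) * c ^ p + c * s, ?_⟩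
  rw [hs, one_pow, ((Nat.cast_commute p c).pow_left k).mul_pow, ← pow_mul, hkp, mul_one,
    ← mul_assoc (p : A), ← pow_succ']
  noncomm_ring

theorem exists_one_add_pow_prime_pow_eq (hp : p.Prime) {U W : A} (hU : U * U = p * W) (k : ℕ) :
    ∃ c, (1 + U) ^ p ^ (k + 1) = 1 + (p : A) ^ (k + 1) * c := by
  induction k with
  | zero => simpa using exists_one_add_pow_prime_eq hp hU
  | succ k ih =>
    obtain ⟨c, hc⟩ := ih
    obtain ⟨c', hc'⟩ := exists_one_add_prime_pow_mul_pow_prime_eq hp k.succ_ne_zero c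
    exact ⟨c', by rw [pow_succ p (k + 1), pow_mul, hc, hc']⟩

end Unipotent

namespace Matrix

variable {R : Type*} [CommRing R]

theorem mul_self_eq_trace_smul_sub_det_smul (A : Matrix (Fin 2) (Fin 2) R) :
    A * A = A.trace • A - A.det • (1 : Matrix (Fin 2) (Fin 2) R) := by
  ext i j
  fin_cases i <;> fin_cases j <;>
    simp [mul_apply, Fin.sum_univ_two, trace_fin_two, det_fin_two] <;> ring

theorem exists_pow_eq_smul_add_smul_one (A : Matrix (Fin 2) (Fin 2) R) (k : ℕ) :
    ∃ α β : R, A ^ k = α • A + β • (1 : Matrix (Fin 2) (Fin 2) R) := by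
  induction k with
  | zero => exact ⟨0, 1, by simp⟩
  | succ k ih =>
    obtain ⟨α, β, h⟩ := ih
    refine ⟨α * A.trace + β, -(α * A.det), ?_⟩
    rw [pow_succ, h, add_mul, smul_mul_assoc, smul_mul_assoc, one_mul,
      mul_self_eq_trace_smul_sub_det_smul]
    module

theorem trace_eq_two_of_mulVec_eq_self {G : Matrix (Fin 2) (Fin 2) R} (hG : G.det = 1)
    {x : Fin 2 → R} {i : Fin 2} (hi : IsUnit (x i)) (hGx : G *ᵥ x = x) : G.trace = 2 := by
  have h := congrArg (· *ᵥ x) (mul_self_eq_trace_smul_sub_det_smul G)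
  simp only [← mulVec_mulVec, hGx, sub_mulVec, smul_mulVec, hG, one_smul, one_mulVec] at h
  have : (G.trace - 2) * x i = 0 := by
    have := congrFun h i
    simp only [Pi.sub_apply, Pi.smul_apply, smul_eq_mul] at this
    linear_combination -this
  exact sub_eq_zero.mp (hi.mul_left_eq_zero.mp this)

theorem pow_eq_one_of_mulVec_eq_self {F : Matrix (Fin 2) (Fin 2) R} (hF : F.det = 1)
    (hdisc : IsUnit (F.trace ^ 2 - 4)) {x : Fin 2 → R} {i : Fin 2} (hi : IsUnit (x i)) {k : ℕ}
    (hx : F ^ k *ᵥ x = x) : F ^ k = 1 := by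
  obtain ⟨α, β, hk⟩ := exists_pow_eq_smul_add_smul_one F k
  have htr : α * F.trace + 2 * β = 2 := by
    have := trace_eq_two_of_mulVec_eq_self (by rw [det_pow, hF, one_pow]) hi hx
    rw [hk, trace_add, trace_smul, trace_smul, trace_one, Fintype.card_fin, smul_eq_mul,
      smul_eq_mul, Nat.cast_ofNat] at this
    linear_combination this
  set D : Matrix (Fin 2) (Fin 2) R := (2 : R) • F - F.trace • 1
  have hD : D * D = (F.trace ^ 2 - 4) • (1 : Matrix (Fin 2) (Fin 2) R) := by
    have := mul_self_eq_trace_smul_sub_det_smul F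
    rw [hF] at this
    simp only [D, sub_mul, mul_sub, smul_mul_assoc, mul_smul_comm, mul_one, one_mul, this]
    module
  have hαD : α • D = (2 : R) • (F ^ k - 1) := by
    rw [hk]
    linear_combination (norm := module) -htr • (1 : Matrix (Fin 2) (Fin 2) R)
  have hα : α = 0 := by
    have hDx : α • (D *ᵥ x) = 0 := by
      rw [← smul_mulVec, hαD, smul_mulVec, sub_mulVec, hx, one_mulVec, sub_self, smul_zero]
    have := congrArg (D *ᵥ ·) hDx
    simp only [mulVec_smul, mulVec_mulVec, hD, smul_mulVec, one_mulVec, mulVec_zero,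
      smul_smul] at this
    have := congrFun this i
    simp only [Pi.smul_apply, smul_eq_mul, Pi.zero_apply] at this
    exact hdisc.mul_left_eq_zero.mp (hi.mul_left_eq_zero.mp (by linear_combination this))
  have hβ : β = 1 := by
    rw [hk, hα, zero_smul, zero_add, smul_mulVec, one_mulVec] at hx
    have : (β - 1) * x i = 0 := by
      have := congrFun hx i
      simp only [Pi.smul_apply, smul_eq_mul] at this
      linear_combination this
    exact sub_eq_zero.mp (hi.mul_left_eq_zero.mp this)
  rw [hk, hα, hβ, zero_smul, zero_add, one_smul]

theorem eq_neg_one_of_mul_self_eq_one [IsLocalRing R] (h2 : IsUnit (2 : R))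
    {G : Matrix (Fin 2) (Fin 2) R} (hG : G.det = 1) (hGG : G * G = 1) (hG1 : G ≠ 1) :
    G = -1 := by
  have htG : G.trace • G = (2 : R) • (1 : Matrix (Fin 2) (Fin 2) R) := by
    have := mul_self_eq_trace_smul_sub_det_smul G
    rw [hGG, hG, one_smul] at this
    linear_combination (norm := module) -this
  have ht : (G.trace + 2) * (G.trace - 2) = 0 := by
    have := congrArg det htG
    rw [det_smul, det_smul, hG, det_one, Fintype.card_fin] at this
    linear_combination this
  have h4 : IsUnit ((G.trace + 2) + (2 - G.trace)) := by
    convert h2.mul h2 using 1; ring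
  rcases IsLocalRing.isUnit_or_isUnit_of_isUnit_add h4 with h | h
  · have ht2 : G.trace = 2 := by linear_combination h.mul_right_eq_zero.mp ht
    exact absurd ((h2.smul_left_cancel).mp (by rw [← htG, ht2])) hG1
  · have ht2 : G.trace = -2 := by
      linear_combination h.mul_right_eq_zero.mp
        (show (2 - G.trace) * (G.trace + 2) = 0 by linear_combination -ht)
    refine (h2.smul_left_cancel).mp ?_
    linear_combination (norm := module) -htG + ht2 • G

theorem pow_prime_pow_eq_one {p r : ℕ} [CharP R (p ^ r)] (hp : p.Prime) (hr : r ≠ 0)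
    {H : Matrix (Fin 2) (Fin 2) R} (hH : H.det = 1) (htr : (p : R) ∣ H.trace - 2) :
    H ^ p ^ r = 1 := by
  obtain ⟨τ, hτ⟩ := htr
  have hU : (H - 1) * (H - 1) = (p : Matrix (Fin 2) (Fin 2) R) * (τ • H) := by
    have := mul_self_eq_trace_smul_sub_det_smul H
    rw [hH, one_smul] at this
    calc (H - 1) * (H - 1) = H * H - (2 : R) • H + 1 := by rw [two_smul]; noncomm_ring
      _ = (H.trace - 2) • H := by rw [this]; module
      _ = _ := by rw [hτ, mul_smul, Nat.cast_smul_eq_nsmul, nsmul_eq_mul]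
  obtain ⟨c, hc⟩ := exists_one_add_pow_prime_pow_eq hp hU (r - 1)
  rwa [Nat.sub_add_cancel (Nat.pos_of_ne_zero hr), ← Nat.cast_pow,
    CharP.cast_eq_zero, zero_mul, add_zero, add_sub_cancel] at hc

variable {n : Type*} [Fintype n] [DecidableEq n]

theorem pow_mulVec_eq_self {A : Matrix n n R} {x : n → R} (hx : A *ᵥ x = x) (m : ℕ) :
    A ^ m *ᵥ x = x := by
  induction m with
  | zero => simp
  | succ m ih => rw [pow_succ, ← mulVec_mulVec, hx, ih]

theorem exists_prime_dvd_orderOf_pow_div_mulVec_eq_self {F : Matrix n n R}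
    (hF : IsOfFinOrder F) {x : n → R} {k : ℕ} (hx : F ^ k *ᵥ x = x) (hk : F ^ k ≠ 1) :
    ∃ q, q.Prime ∧ q ∣ orderOf F ∧ F ^ (orderOf F / q) *ᵥ x = x := by
  have hg : k.gcd (orderOf F) < orderOf F :=
    lt_of_le_of_ne (Nat.le_of_dvd hF.orderOf_pos (k.gcd_dvd_right _))
      fun h => hk (orderOf_dvd_iff_pow_eq_one.mp (h ▸ k.gcd_dvd_left _))
  obtain ⟨j, -, hj⟩ := Nat.exists_mul_mod_eq_gcd hg
  have hgx : F ^ k.gcd (orderOf F) *ᵥ x = x := by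
    rw [← hj, pow_mod_orderOf, pow_mul, pow_mulVec_eq_self hx]
  obtain ⟨c, hc⟩ := k.gcd_dvd_right (orderOf F)
  have hc1 : c ≠ 1 := by rintro rfl; omega
  obtain ⟨d, hd⟩ := Nat.minFac_dvd c
  have hcd : orderOf F = c.minFac * (k.gcd (orderOf F) * d) := by
    rw [mul_left_comm, ← hd, ← hc]
  refine ⟨c.minFac, Nat.minFac_prime hc1, hcd ▸ dvd_mul_right _ _, ?_⟩
  rw [hcd, Nat.mul_div_cancel_left _ (Nat.minFac_pos c), pow_mul, pow_mulVec_eq_self hgx]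

theorem isOfFinOrder_of_isUnit_det [Finite R] {M : Matrix n n R} (h : IsUnit M.det) :
    IsOfFinOrder M := by
  obtain ⟨u, rfl⟩ := (isUnit_iff_isUnit_det M).mpr h
  exact Units.isOfFinOrder_val.mpr (isOfFinOrder_of_finite u)

end Matrix

theorem Matrix.map_mulVec_comp {m n R S : Type*} [Fintype n] [NonAssocSemiring R]
    [NonAssocSemiring S] (f : R →+* S) (M : Matrix m n R) (v : n → R) :
    M.map f *ᵥ (f ∘ v) = f ∘ (M *ᵥ v) :=
  funext fun i => (f.map_mulVec M v i).symm

section Counting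

variable {G : Type*} [AddGroup G] {p m : ℕ}

theorem AddSubgroup.prime_mul_card_le (hp : p.Prime) (hG : Nat.card G = p ^ m)
    {K : AddSubgroup G} (hK : K ≠ ⊤) : p * Nat.card K ≤ Nat.card G := by
  obtain ⟨j, -, hj⟩ := (Nat.dvd_prime_pow hp).mp (hG ▸ K.index_dvd_card)
  have hj0 : j ≠ 0 := by
    rintro rfl
    exact hK (AddSubgroup.index_eq_one.mp (by rw [hj, pow_zero]))
  rw [← K.card_mul_index, hj, mul_comm p]
  exact Nat.mul_le_mul_left _ (Nat.le_self_pow hj0 p)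

theorem AddSubgroup.pow_mul_sub_one_le_card_subtype [Finite G] (hp : p.Prime)
    (hG : Nat.card G = p ^ (m + 1)) {K : AddSubgroup G} (hK : K ≠ ⊤) {P : G → Prop}
    (hP : ∀ x, ¬ P x → x ∈ K) :
    p ^ m * (p - 1) ≤ Nat.card {x // P x} := by
  classical
  have := Fintype.ofFinite G
  have hK' : Nat.card {x // ¬ P x} ≤ Nat.card K :=
    Nat.card_le_card_of_injective (fun x => ⟨x, hP x x.2⟩)
      fun x y h => Subtype.ext (congrArg Subtype.val h :)
  have hsum : Nat.card {x // P x} + Nat.card {x // ¬ P x} = p ^ m * p := by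
    rw [← pow_succ, ← hG]
    simp only [Nat.card_eq_fintype_card, Fintype.card_subtype_compl]
    have := Fintype.card_subtype_le P
    omega
  have hpK := K.prime_mul_card_le hp hG hK
  rw [hG, pow_succ, mul_comm p] at hpK
  have := Nat.le_of_mul_le_mul_right hpK hp.pos
  rw [Nat.mul_sub_one]
  omega

end Counting

theorem ZMod.isUnit_or_natCast_dvd {p r : ℕ} (hp : p.Prime) (a : ZMod (p ^ r)) :
    IsUnit a ∨ (p : ZMod (p ^ r)) ∣ a := by
  have : NeZero (p ^ r) := ⟨pow_ne_zero r hp.ne_zero⟩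
  rw [← ZMod.natCast_zmod_val a, ZMod.isUnit_iff_coprime]
  by_cases h : p ∣ a.val
  · exact Or.inr (Nat.cast_dvd_cast h)
  · exact Or.inl (Nat.Coprime.pow_right r (Nat.coprime_comm.mp (hp.coprime_iff_not_dvd.mpr h)))

theorem ZMod.isLocalRing_prime_pow {p r : ℕ} (hp : p.Prime) (hr : r ≠ 0) :
    IsLocalRing (ZMod (p ^ r)) := by
  have : Fact (1 < p ^ r) := ⟨Nat.one_lt_pow hr hp.one_lt⟩
  refine IsLocalRing.of_isUnit_or_isUnit_one_sub_self fun a => ?_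
  rcases isUnit_or_natCast_dvd hp a with ha | ha
  · exact Or.inl ha
  rcases isUnit_or_natCast_dvd hp (1 - a) with hb | hb
  · exact Or.inr hb
  refine absurd (isUnit_of_dvd_one ?_) (prime_natCast_not_isUnit_pow hp (Nat.pos_of_ne_zero hr))
  simpa using dvd_add ha hb

theorem isFull_iff {N : ℕ} {F : Matrix (Fin 2) (Fin 2) (ZMod N)} (hF : IsOfFinOrder F)
    {x : Fin 2 → ZMod N} : IsFull F x ↔ ∀ k, F ^ k *ᵥ x = x → F ^ k = 1 := by
  have hpos := hF.orderOf_pos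
  constructor
  · intro hfull k hk
    have : (⟨k % orderOf F, Nat.mod_lt _ hpos⟩ : Fin (orderOf F)) = ⟨0, hpos⟩ :=
      hfull (by simpa [pow_mod_orderOf] using hk)
    rw [← pow_mod_orderOf, Fin.mk.inj_iff.mp this, pow_zero]
  · intro h i j hij
    have hij : F ^ (i : ℕ) *ᵥ x = F ^ (j : ℕ) *ᵥ x := hij
    have hfix : F ^ (orderOf F - i + j) = 1 := h _ <| by
      rw [pow_add, ← mulVec_mulVec, ← hij, mulVec_mulVec, ← pow_add,
        Nat.sub_add_cancel i.2.le, pow_orderOf_eq_one, one_mulVec]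
    refine Fin.ext (pow_injOn_Iio_orderOf i.2 j.2 ?_)
    calc F ^ (i : ℕ) = F ^ (i : ℕ) * F ^ (orderOf F - i + j) := by rw [hfix, mul_one]
      _ = F ^ (j : ℕ) := by
        rw [← pow_add, ← Nat.add_assoc, Nat.add_sub_cancel' i.2.le, pow_add, pow_orderOf_eq_one,
          one_mul]

theorem IsFull.of_map {N a b : ℕ} {F : Matrix (Fin 2) (Fin 2) (ZMod N)} (hF : IsOfFinOrder F)
    {f : ZMod N →+* ZMod a} {g : ZMod N →+* ZMod b}
    (hfg : Function.Injective fun c => (f c, g c)) {x : Fin 2 → ZMod N}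
    (hf : IsFull (f.mapMatrix F) (f ∘ x))
    (hg : IsFull (g.mapMatrix F) (g ∘ x)) : IsFull F x := by
  rw [isFull_iff hF]
  intro k hk
  have hmap : ∀ {M : ℕ} (h : ZMod N →+* ZMod M), IsFull (h.mapMatrix F) (h ∘ x) →
      h.mapMatrix (F ^ k) = h.mapMatrix 1 := by
    intro M h hh
    have hfin : IsOfFinOrder (h.mapMatrix F) := by
      simpa using (RingHom.mapMatrix (m := Fin 2) h).toMonoidHom.isOfFinOrder hF
    rw [map_pow, map_one]
    refine (isFull_iff hfin).mp hh k ?_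
    rw [← map_pow, RingHom.mapMatrix_apply, map_mulVec_comp, hk]
  ext i j
  have hfij : f ((F ^ k) i j) = f ((1 : Matrix (Fin 2) (Fin 2) (ZMod N)) i j) :=
    congrFun₂ (hmap f hf) i j
  have hgij : g ((F ^ k) i j) = g ((1 : Matrix (Fin 2) (Fin 2) (ZMod N)) i j) :=
    congrFun₂ (hmap g hg) i j
  exact hfg (Prod.ext hfij hgij)

theorem card_isFull_mul_card_isFull_le {N a b : ℕ} [NeZero N]
    {F : Matrix (Fin 2) (Fin 2) (ZMod N)} (hF : IsOfFinOrder F) {f : ZMod N →+* ZMod a}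
    {g : ZMod N →+* ZMod b}
    (hfg : Function.Bijective fun c => (f c, g c)) :
    Nat.card {y // IsFull (f.mapMatrix F) y} * Nat.card {z // IsFull (g.mapMatrix F) z} ≤
      Nat.card {x // IsFull F x} := by
  set e := Equiv.ofBijective _ hfg
  have hf (y : ZMod a) (z : ZMod b) : f (e.symm (y, z)) = y :=
    congrArg Prod.fst (e.apply_symm_apply (y, z))
  have hg (y : ZMod a) (z : ZMod b) : g (e.symm (y, z)) = z :=
    congrArg Prod.snd (e.apply_symm_apply (y, z))
  rw [← Nat.card_prod]
  refine Nat.card_le_card_of_injective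
    (fun yz => ⟨fun i => e.symm (yz.1.1 i, yz.2.1 i), IsFull.of_map hF hfg.1 ?_ ?_⟩) ?_
  · convert yz.1.2 using 1
    exact funext fun i => hf _ _
  · convert yz.2.2 using 1
    exact funext fun i => hg _ _
  · rintro ⟨⟨y, _⟩, ⟨z, _⟩⟩ ⟨⟨y', _⟩, ⟨z', _⟩⟩ hyz
    have h' (i : Fin 2) : (y i, z i) = (y' i, z' i) :=
      e.symm.injective (congrFun (congrArg Subtype.val hyz) i)
    simp only [Prod.mk.injEq] at h'
    exact Prod.ext (Subtype.ext (funext fun i => (h' i).1))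
      (Subtype.ext (funext fun i => (h' i).2))

theorem isFull_of_isUnit_apply {N : ℕ} [NeZero N] {F : Matrix (Fin 2) (Fin 2) (ZMod N)}
    (hF : F.det = 1) (hdisc : IsUnit (F.trace ^ 2 - 4)) {x : Fin 2 → ZMod N} {i : Fin 2}
    (hi : IsUnit (x i)) : IsFull F x :=
  (isFull_iff (isOfFinOrder_of_isUnit_det (hF ▸ isUnit_one))).mpr
    fun _ hk => pow_eq_one_of_mulVec_eq_self hF hdisc hi hk

theorem exists_addSubgroup_ne_top_of_isUnit_disc {N : ℕ} [NeZero N] [IsLocalRing (ZMod N)]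
    {F : Matrix (Fin 2) (Fin 2) (ZMod N)} (hF : F.det = 1) (hdisc : IsUnit (F.trace ^ 2 - 4)) :
    ∃ K : AddSubgroup (Fin 2 → ZMod N), K ≠ ⊤ ∧ ∀ x, ¬ IsFull F x → x ∈ K := by
  refine ⟨AddSubgroup.pi Set.univ fun _ => (IsLocalRing.maximalIdeal (ZMod N)).toAddSubgroup,
    fun h => ?_, fun x hx => ?_⟩
  · have h1 := (AddSubgroup.mem_pi Set.univ).mp (h ▸ AddSubgroup.mem_top (fun _ => 1)) 0
      (Set.mem_univ 0)
    exact IsLocalRing.notMem_maximalIdeal.mpr isUnit_one h1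
  · refine (AddSubgroup.mem_pi _).mpr fun i _ => ?_
    by_contra hi
    exact hx (isFull_of_isUnit_apply hF hdisc (IsLocalRing.notMem_maximalIdeal.mp hi))

section PrimePower

variable {p r : ℕ}

theorem orderOf_dvd_two_mul_prime_pow (hp : p.Prime) (hr : r ≠ 0)
    {F : Matrix (Fin 2) (Fin 2) (ZMod (p ^ r))} (hF : F.det = 1)
    (hdisc : ¬ IsUnit (F.trace ^ 2 - 4)) : orderOf F ∣ 2 * p ^ r := by
  obtain ⟨H, hHdet, hHtr, hHF⟩ : ∃ H : Matrix (Fin 2) (Fin 2) (ZMod (p ^ r)),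
      H.det = 1 ∧ (p : ZMod (p ^ r)) ∣ H.trace - 2 ∧ H ^ 2 = F ^ 2 := by
    have : ¬ IsUnit (F.trace - 2) ∨ ¬ IsUnit (F.trace + 2) := by
      rw [← not_and_or, ← IsUnit.mul_iff]
      convert hdisc using 2
      ring
    rcases this with h | h
    · exact ⟨F, hF, (ZMod.isUnit_or_natCast_dvd hp _).resolve_left h, rfl⟩
    · refine ⟨-F, by rw [det_neg, hF]; simp, ?_, neg_sq F⟩
      rw [trace_neg, show -F.trace - 2 = -(F.trace + 2) by ring, dvd_neg]
      exact (ZMod.isUnit_or_natCast_dvd hp _).resolve_left h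
  apply orderOf_dvd_of_pow_eq_one
  rw [pow_mul, ← hHF, ← pow_mul, mul_comm, pow_mul, pow_prime_pow_eq_one hp hr hHdet hHtr,
    one_pow]

theorem eq_zero_or_mulVec_eq_self_of_not_isFull (hp : p.Prime) (hp2 : Odd p) (hr : r ≠ 0)
    {F : Matrix (Fin 2) (Fin 2) (ZMod (p ^ r))} (hF : F.det = 1) (hn : orderOf F ∣ 2 * p ^ r)
    {x : Fin 2 → ZMod (p ^ r)} (hx : ¬ IsFull F x) :
    x = 0 ∨ p ∣ orderOf F ∧ F ^ (orderOf F / p) *ᵥ x = x := by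
  have : NeZero (p ^ r) := ⟨pow_ne_zero r hp.ne_zero⟩
  have hfin := isOfFinOrder_of_isUnit_det (hF ▸ isUnit_one)
  obtain ⟨k, hk, hk1⟩ : ∃ k, F ^ k *ᵥ x = x ∧ F ^ k ≠ 1 := by
    simpa [isFull_iff hfin] using hx
  obtain ⟨q, hq, hqn, hqx⟩ := exists_prime_dvd_orderOf_pow_div_mulVec_eq_self hfin hk hk1
  rcases (Nat.Prime.dvd_mul hq).mp (hqn.trans hn) with h2 | hpr
  · obtain rfl := (Nat.prime_dvd_prime_iff_eq hq Nat.prime_two).mp h2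
    have := ZMod.isLocalRing_prime_pow hp hr
    have h2u : IsUnit (2 : ZMod (p ^ r)) := by
      simpa using (ZMod.isUnit_iff_coprime 2 _).mpr (Nat.coprime_two_left.mpr (hp2.pow))
    have hpos := hfin.orderOf_pos
    have hinv : F ^ (orderOf F / 2) = -1 := by
      refine eq_neg_one_of_mul_self_eq_one h2u (by rw [det_pow, hF, one_pow]) ?_
        (pow_ne_one_of_lt_orderOf ?_ (Nat.div_lt_self hpos one_lt_two))
      · rw [← pow_add, ← two_mul, Nat.mul_div_cancel' hqn, pow_orderOf_eq_one]
      · have := Nat.le_of_dvd hpos hqn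
        omega
    rw [hinv, neg_mulVec, one_mulVec, neg_eq_iff_add_eq_zero, ← two_smul (ZMod (p ^ r))] at hqx
    exact Or.inl (h2u.smul_eq_zero.mp hqx)
  · obtain rfl := (Nat.prime_dvd_prime_iff_eq hq hp).mp (hq.dvd_of_dvd_pow hpr)
    exact Or.inr ⟨hqn, hqx⟩

theorem exists_addSubgroup_ne_top_of_orderOf_dvd (hp : p.Prime) (hp2 : Odd p) (hr : r ≠ 0)
    {F : Matrix (Fin 2) (Fin 2) (ZMod (p ^ r))} (hF : F.det = 1) (hn : orderOf F ∣ 2 * p ^ r) :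
    ∃ K : AddSubgroup (Fin 2 → ZMod (p ^ r)), K ≠ ⊤ ∧
      ∀ x, ¬ IsFull F x → x ∈ K := by
  have : Fact (1 < p ^ r) := ⟨Nat.one_lt_pow hr hp.one_lt⟩
  have hnf := fun x => eq_zero_or_mulVec_eq_self_of_not_isFull hp hp2 hr hF hn (x := x)
  by_cases hpn : p ∣ orderOf F
  · refine ⟨(LinearMap.ker (toLin' (F ^ (orderOf F / p) - 1))).toAddSubgroup, fun h => ?_,
      fun x hx => ?_⟩
    · have hpos := (isOfFinOrder_of_isUnit_det (hF ▸ isUnit_one)).orderOf_pos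
      refine pow_ne_one_of_lt_orderOf
        ((Nat.div_ne_zero_iff_of_dvd hpn).mpr ⟨hpos.ne', hp.ne_zero⟩)
        (Nat.div_lt_self hpos hp.one_lt) (sub_eq_zero.mp (toLin'.map_eq_zero_iff.mp ?_))
      exact LinearMap.ker_eq_top.mp (Submodule.toAddSubgroup_eq_top.mp h)
    · rcases hnf x hx with rfl | ⟨-, hx⟩
      · exact zero_mem _
      · rw [Submodule.mem_toAddSubgroup, LinearMap.mem_ker, toLin'_apply, sub_mulVec, hx,
          one_mulVec, sub_self]
  · refine ⟨⊥, bot_ne_top, fun x hx => ?_⟩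
    rcases hnf x hx with rfl | ⟨h, -⟩
    · exact zero_mem _
    · exact absurd h hpn

theorem card_isFull_prime_pow (hp : p.Prime) (hp2 : Odd p) (hr : r ≠ 0)
    {F : Matrix (Fin 2) (Fin 2) (ZMod (p ^ r))} (hF : F.det = 1) :
    p ^ r * (p ^ r).totient ≤ Nat.card {x // IsFull F x} := by
  have : NeZero (p ^ r) := ⟨pow_ne_zero r hp.ne_zero⟩
  have := ZMod.isLocalRing_prime_pow hp hr
  obtain ⟨K, hK, hnf⟩ : ∃ K : AddSubgroup (Fin 2 → ZMod (p ^ r)), K ≠ ⊤ ∧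
      ∀ x, ¬ IsFull F x → x ∈ K := by
    by_cases hdisc : IsUnit (F.trace ^ 2 - 4)
    · exact exists_addSubgroup_ne_top_of_isUnit_disc hF hdisc
    · exact exists_addSubgroup_ne_top_of_orderOf_dvd hp hp2 hr hF
        (orderOf_dvd_two_mul_prime_pow hp hr hF hdisc)
  obtain ⟨s, rfl⟩ := Nat.exists_eq_add_one.mpr (Nat.pos_of_ne_zero hr)
  have hcard : Nat.card (Fin 2 → ZMod (p ^ (s + 1))) = p ^ (2 * s + 1 + 1) := by
    rw [Nat.card_fun, Nat.card_zmod, Nat.card_fin, ← pow_mul]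
    ring_nf
  calc p ^ (s + 1) * (p ^ (s + 1)).totient = p ^ (2 * s + 1) * (p - 1) := by
        rw [Nat.totient_prime_pow_succ hp]
        ring
    _ ≤ _ := AddSubgroup.pow_mul_sub_one_le_card_subtype hp hcard hK hnf

end PrimePower

theorem card_full_points_ge_general (N : ℕ) (hN : Odd N)
    (F : Matrix (Fin 2) (Fin 2) (ZMod N)) (hdet : F.det = 1) :
    N * N.totient ≤ Nat.card {x : Fin 2 → ZMod N // IsFull F x} := by
  induction N using Nat.recOnPosPrimePosCoprime with
  | prime_pow p r hp hr =>
    exact card_isFull_prime_pow hp ((Nat.odd_pow_iff hr.ne').mp hN) hr.ne' hdet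
  | zero => exact absurd hN Nat.not_odd_zero
  | one =>
    have hfull (x : Fin 2 → ZMod 1) : IsFull F x :=
      (isFull_iff (isOfFinOrder_of_isUnit_det (hdet ▸ isUnit_one))).mpr
        fun _ _ => Subsingleton.elim _ _
    have : Nonempty {x // IsFull F x} := ⟨⟨0, hfull 0⟩⟩
    simp
  | coprime a b ha hb hab iha ihb =>
    obtain ⟨hoa, hob⟩ := Nat.odd_mul.mp hN
    have : NeZero a := ⟨by omega⟩
    have : NeZero b := ⟨by omega⟩
    have hdet' {M : ℕ} (f : ZMod (a * b) →+* ZMod M) : (f.mapMatrix F).det = 1 := by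
      rw [← RingHom.map_det, hdet, map_one]
    set e := ZMod.chineseRemainder hab
    calc a * b * (a * b).totient = a * a.totient * (b * b.totient) := by
          rw [Nat.totient_mul hab]
          ring
      _ ≤ _ := Nat.mul_le_mul (iha hoa _ (hdet' ((RingHom.fst _ _).comp e.toRingHom)))
          (ihb hob _ (hdet' ((RingHom.snd _ _).comp e.toRingHom)))
      _ ≤ _ := card_isFull_mul_card_isFull_le (isOfFinOrder_of_isUnit_det (hdet ▸ isUnit_one))
          e.bijective

/-- For `N` odd and `F ∈ SL(2, ℤ/Nℤ)`, the number of `F`-full points in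
`(ℤ/Nℤ)²` is at least `N·φ(N)`. -/
theorem card_full_points_ge (N : ℕ) [NeZero N] (hN : Odd N)
    (F : Matrix (Fin 2) (Fin 2) (ZMod N)) (hdet : F.det = 1) :
    N * N.totient ≤ Nat.card {x : Fin 2 → ZMod N // IsFull F x} :=
  card_full_points_ge_general N hN F hdet
end

section
/- Let G be a finite abelian group and q : G → ℚ/ℤ a quadratic form (meaning b^q(x,y) := q(x+y) − q(x) − q(y) is biadditive). Let B be the kernel of the homomorphism G → Hom(G, ℚ/ℤ) adjoint to b^q, and define the normalized Gauss sum Γ(G,q) = |G|^{−1/2} Σ_{x∈G} e^{2πi q(x)}. If q vanishes on B then |Γ(G,q)| = |B|^{1/2}, and if q does not vanish on B then Γ(G,q) = 0. -/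
/-- The multiplicative pairing associated to a (multiplicatively written)
quadratic form `E : G → ℂ`, `E x = e^{2πi q(x)}`:
`b(x,y) = E(x+y)·E(x)⁻¹·E(y)⁻¹ = e^{2πi b^q(x,y)}`. -/
noncomputable def qfPairing {G : Type*} [AddCommGroup G] (E : G → ℂ) (x y : G) : ℂ :=
  E (x + y) * (E x)⁻¹ * (E y)⁻¹

/-!
Since `|E| = 1`, `|∑ E|² = ∑_{y,z} E(y + z) / E(y) = ∑_z E(z) ∑_y b(z, y)`, and by orthogonality
of the character `b(z, ·)` the inner sum is `|G|` for `z` in the radical `B` and `0` otherwise.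
Hence `|∑ E|² = |G| ∑_{z ∈ B} E(z)`. On `B` the function `E` is itself a character, so this last
sum is `|B|` or `0` according as `E` is trivial on `B` or not.
-/

namespace qfPairing

variable {G : Type*} [AddCommGroup G] {E : G → ℂ}

lemma comm (E : G → ℂ) (x y : G) : qfPairing E x y = qfPairing E y x := by
  rw [qfPairing, qfPairing, add_comm]; ring

lemma apply_add_eq_mul_mul (hE : ∀ x, E x ≠ 0) (x y : G) :
    E (x + y) = E x * E y * qfPairing E x y := by
  rw [qfPairing]; field_simp [hE x, hE y]

variable (hE : ∀ x, E x ≠ 0)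
  (hbi : ∀ x y z : G, qfPairing E (x + y) z = qfPairing E x z * qfPairing E y z)
include hE hbi

lemma zero_left (y : G) : qfPairing E 0 y = 1 := by
  have hne : qfPairing E 0 y ≠ 0 := by simp [qfPairing, hE]
  have h := hbi 0 0 y
  rw [add_zero] at h
  exact (mul_eq_left₀ hne).mp h.symm

lemma apply_zero_eq_one : E 0 = 1 := by
  have h := zero_left hE hbi 0
  rw [qfPairing, add_zero, mul_inv_cancel₀ (hE 0), one_mul] at h
  exact inv_eq_one.mp h

@[simps]
noncomputable def char (x : G) : AddChar G ℂ where
  toFun := qfPairing E x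
  map_zero_eq_one' := by rw [comm]; exact zero_left hE hbi x
  map_add_eq_mul' y z := by rw [comm, hbi, comm E y, comm E z]

def radical : AddSubgroup G where
  carrier := {x | ∀ y, qfPairing E x y = 1}
  zero_mem' := zero_left hE hbi
  add_mem' hx hx' y := by rw [hbi, hx y, hx' y, one_mul]
  neg_mem' {x} hx y := by
    have h := hbi x (-x) y
    rwa [add_neg_cancel, zero_left hE hbi, hx, one_mul, eq_comm] at h

lemma char_eq_zero_iff {x : G} : char hE hbi x = 0 ↔ x ∈ radical hE hbi :=
  AddChar.eq_zero_iff

noncomputable def radicalChar : AddChar (radical hE hbi) ℂ where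
  toFun x := E x
  map_zero_eq_one' := apply_zero_eq_one hE hbi
  map_add_eq_mul' x x' := by
    rw [AddSubgroup.coe_add, apply_add_eq_mul_mul hE, x.2 x', mul_one]

open scoped Classical in
lemma sum_mul_sum_inv [Fintype G] :
    (∑ x, E x) * ∑ y, (E y)⁻¹ = Fintype.card G * ∑ z : radical hE hbi, E z := by
  calc (∑ x, E x) * ∑ y, (E y)⁻¹ = ∑ y, ∑ z, E (y + z) * (E y)⁻¹ := by
        rw [Finset.mul_sum]
        refine Fintype.sum_congr _ _ fun y => ?_
        rw [Finset.sum_mul]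
        exact (Fintype.sum_equiv (Equiv.addLeft y) _ _ fun z => rfl).symm
    _ = ∑ z, E z * ∑ y, char hE hbi z y := by
        rw [Finset.sum_comm]
        simp_rw [Finset.mul_sum, apply_add_eq_mul_mul hE, char_apply, comm E _ _]
        refine Fintype.sum_congr _ _ fun z => Fintype.sum_congr _ _ fun y => ?_
        field_simp [hE y]
    _ = ∑ z, E z * if z ∈ radical hE hbi then (Fintype.card G : ℂ) else 0 := by
        simp_rw [AddChar.sum_eq_ite, char_eq_zero_iff]
    _ = Fintype.card G * ∑ z : radical hE hbi, E z := by
        simp_rw [mul_ite, mul_zero, ← Finset.sum_filter, ← Finset.sum_mul,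
          mul_comm (Fintype.card G : ℂ)]
        congr 1
        exact Finset.sum_subtype _ (by simp) E

end qfPairing

/-- Turaev's lemma on Gauss sums. Let `G` be a finite abelian group and
`q : G → ℚ/ℤ` a quadratic form, encoded by the unit-circle valued function
`E x = e^{2πi q(x)}` whose associated pairing `b(x,y) = E(x+y)E(x)⁻¹E(y)⁻¹` is
biadditive. Let `B` be the radical of the pairing. If `q(B) = 0` (i.e. `E = 1`
on `B`) then the normalized Gauss sum `Γ(G,q) = |G|^{-1/2} ∑ₓ E x` satisfies
`|Γ(G,q)| = |B|^{1/2}`, i.e. `|∑ₓ E x|² = |G|·|B|`; and if `q` does not vanish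
on `B` then `Γ(G,q) = 0`. -/
theorem turaev_gauss_sum {G : Type*} [AddCommGroup G] [Fintype G]
    (E : G → ℂ) (habs : ∀ x, ‖E x‖ = 1)
    (hbi : ∀ x y z : G,
      qfPairing E (x + y) z = qfPairing E x z * qfPairing E y z) :
    ((∀ x : G, (∀ y, qfPairing E x y = 1) → E x = 1) →
        ‖∑ x : G, E x‖ ^ 2 =
          (Fintype.card G : ℝ) *
            Nat.card {x : G // ∀ y, qfPairing E x y = 1}) ∧
      ((∃ x : G, (∀ y, qfPairing E x y = 1) ∧ E x ≠ 1) →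
        ∑ x : G, E x = 0) := by
  classical
  have hE : ∀ x, E x ≠ 0 := fun x => norm_ne_zero_iff.mp (by rw [habs]; exact one_ne_zero)
  have hnorm : ((‖∑ x, E x‖ ^ 2 : ℝ) : ℂ) =
      Fintype.card G * ∑ z : qfPairing.radical hE hbi, qfPairing.radicalChar hE hbi z := by
    rw [Complex.ofReal_pow, ← Complex.mul_conj', map_sum]
    simp_rw [← Complex.inv_eq_conj (habs _)]
    exact qfPairing.sum_mul_sum_inv hE hbi
  rw [AddChar.sum_eq_ite] at hnorm
  constructor
  · intro hvan
    rw [if_pos (AddChar.eq_zero_iff.mpr fun z => hvan z.1 z.2),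
      ← Nat.card_eq_fintype_card (α := qfPairing.radical hE hbi)] at hnorm
    exact_mod_cast hnorm
  · rintro ⟨x, hx, hEx⟩
    rw [if_neg (AddChar.ne_zero_iff.mpr ⟨⟨x, hx⟩, hEx⟩), mul_zero] at hnorm
    exact norm_eq_zero.mp (pow_eq_zero_iff two_ne_zero |>.mp (by exact_mod_cast hnorm))
end

section
/- Let N be an odd positive integer. For every F ∈ SL(2, ℤ/Nℤ), the metaplectic (Clifford) unitary U_F satisfies |Tr(U_F)| ≥ 1; in particular Tr(U_F) ≠ 0. -/
noncomputable section

/-- The cyclic shift (translation) matrix on `ℂ^{ℤ/Nℤ}`: `(Tf)(g) = f(g-1)`. -/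
def shiftMat (N : ℕ) [NeZero N] : Matrix (ZMod N) (ZMod N) ℂ :=
  Matrix.of fun g h => if g = h + 1 then 1 else 0

/-- The modulation matrix: `(Mf)(g) = ω^g f(g)` with `ω = e^{2πi/N}`. -/
def modMat (N : ℕ) [NeZero N] : Matrix (ZMod N) (ZMod N) ℂ :=
  Matrix.diagonal fun g => Complex.exp (2 * Real.pi * Complex.I / N) ^ g.val

/-- The Weyl–Heisenberg displacement operators
`D_λ = τ^{λ₁λ₂} T^{λ₁} M^{λ₂}`, `τ = -e^{πi/N}`. -/
def dispMat (N : ℕ) [NeZero N] (lam : Fin 2 → ZMod N) : Matrix (ZMod N) (ZMod N) ℂ :=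
  ((-Complex.exp (Real.pi * Complex.I / N)) ^ ((lam 0).val * (lam 1).val)) •
    (shiftMat N ^ (lam 0).val * modMat N ^ (lam 1).val)

open Matrix Finset ZMod ComplexConjugate

/-! Up to unimodular phases the displacement matrices `D_λ` are the Weyl matrices `T^a M^b`,
`λ = (a, b)`. These are orthogonal for the trace form, `Tr (D_λ D_μ*) = N δ_{λμ}`, and twirl every
matrix to a multiple of the identity, `∑_λ D_λ A D_λ* = N Tr(A) I`. If `U` is unitary with
`U D_λ = D_{Fλ} U`, then `D_λ U D_λ* U* = D_λ D_{Fλ}*`, so summing traces over `λ` gives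
`N |Tr U|² = N · #{λ | Fλ = λ}`; and `λ = 0` is always a fixed point. -/

section UnitaryErrorBasis

variable {n Λ : Type*} [Fintype n] [DecidableEq n] [Fintype Λ] [DecidableEq Λ]

theorem norm_trace_sq_eq_card_fixedPoints (D : Λ → Matrix n n ℂ) {c : ℂ} (hc : c ≠ 0)
    (htwirl : ∀ A, ∑ lam, D lam * A * (D lam)ᴴ = (c * A.trace) • (1 : Matrix n n ℂ))
    (horth : ∀ lam mu, (D lam * (D mu)ᴴ).trace = if lam = mu then c else 0)
    {σ : Λ → Λ} {U : Matrix n n ℂ} (hU : U * Uᴴ = 1)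
    (hUσ : ∀ lam, U * D lam = D (σ lam) * U) :
    ‖U.trace‖ ^ 2 = #{lam | σ lam = lam} := by
  have hconj : ∀ lam, D lam * U * (D lam)ᴴ * Uᴴ = D lam * (D (σ lam))ᴴ := fun lam => by
    have h := congrArg conjTranspose (hUσ lam)
    rw [conjTranspose_mul, conjTranspose_mul] at h
    rw [Matrix.mul_assoc, Matrix.mul_assoc, h, ← Matrix.mul_assoc U, hU, Matrix.one_mul]
  have key : c * ‖U.trace‖ ^ 2 = c * #{lam | σ lam = lam} :=
    calc c * ‖U.trace‖ ^ 2 = (∑ lam, D lam * U * (D lam)ᴴ * Uᴴ).trace := by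
          rw [← Finset.sum_mul, htwirl, smul_mul, Matrix.one_mul, trace_smul, trace_conjTranspose,
            smul_eq_mul, mul_assoc, RCLike.star_def, Complex.mul_conj']
      _ = ∑ lam, (D lam * (D (σ lam))ᴴ).trace := by simp only [trace_sum, hconj]
      _ = c * #{lam | σ lam = lam} := by
          rw [natCast_card_filter, mul_sum]
          simp only [horth, mul_ite, mul_one, mul_zero, eq_comm]
  exact_mod_cast mul_left_cancel₀ hc key

end UnitaryErrorBasis

lemma sum_finTwoArrow {α M : Type*} [Fintype α] [AddCommMonoid M] (f : (Fin 2 → α) → M) :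
    ∑ lam, f lam = ∑ a, ∑ b, f ![a, b] := by
  rw [← (finTwoArrowEquiv α).symm.sum_comp, Fintype.sum_prod_type]
  rfl

section WeylHeisenberg

variable {N : ℕ} [NeZero N]

lemma stdAddChar_mul_conj (x y : ZMod N) :
    stdAddChar x * conj (stdAddChar y) = stdAddChar (x - y) := by
  rw [stdAddChar_apply, stdAddChar_apply, stdAddChar_apply, ← Circle.coe_inv_eq_conj,
    ← Circle.coe_mul, ← AddChar.map_neg_eq_inv, ← AddChar.map_add_eq_mul, sub_eq_add_neg]

lemma modMat_eq_diagonal : modMat N = diagonal fun g => stdAddChar g := by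
  refine congrArg diagonal (funext fun g => ?_)
  rw [stdAddChar_apply, toCircle_apply, ← Complex.exp_nat_mul]
  ring_nf

lemma modMat_pow (k : ℕ) : modMat N ^ k = diagonal fun g => stdAddChar ((k : ZMod N) * g) := by
  simp only [modMat_eq_diagonal, diagonal_pow, Pi.pow_def, ← AddChar.map_nsmul_eq_pow,
    nsmul_eq_mul]

lemma shiftMat_pow_apply (k : ℕ) (g h : ZMod N) :
    (shiftMat N ^ k) g h = if g = h + k then 1 else 0 := by
  induction k generalizing g with
  | zero => simp [one_apply]
  | succ k ih =>
    rw [pow_succ', mul_apply, Finset.sum_eq_single (g - 1)]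
    · rw [ih]
      simp [shiftMat, sub_eq_iff_eq_add, add_assoc]
    · intro j _ hj
      rw [shiftMat, of_apply, if_neg fun hg => hj (eq_sub_of_add_eq hg.symm), zero_mul]
    · simp

def weylMat (N : ℕ) [NeZero N] (lam : Fin 2 → ZMod N) : Matrix (ZMod N) (ZMod N) ℂ :=
  of fun g h => if g = h + lam 0 then stdAddChar (lam 1 * h) else 0

lemma shiftMat_pow_mul_modMat_pow (lam : Fin 2 → ZMod N) :
    shiftMat N ^ (lam 0).val * modMat N ^ (lam 1).val = weylMat N lam := by
  ext g h
  rw [modMat_pow, mul_diagonal, shiftMat_pow_apply, weylMat, of_apply, natCast_zmod_val,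
    natCast_zmod_val, ite_mul, one_mul, zero_mul]

lemma dispMat_eq_smul_weylMat (lam : Fin 2 → ZMod N) :
    ∃ z : ℂ, ‖z‖ = 1 ∧ dispMat N lam = z • weylMat N lam := by
  refine ⟨_, ?_, by rw [dispMat, shiftMat_pow_mul_modMat_pow]⟩
  rw [norm_pow, norm_neg, Complex.norm_exp]
  simp

lemma weylMat_mul_apply (lam : Fin 2 → ZMod N) (A : Matrix (ZMod N) (ZMod N) ℂ) (g h : ZMod N) :
    (weylMat N lam * A) g h = stdAddChar (lam 1 * (g - lam 0)) * A (g - lam 0) h := by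
  simp [weylMat, mul_apply, ite_mul, ← sub_eq_iff_eq_add]

lemma mul_conjTranspose_weylMat_apply (lam : Fin 2 → ZMod N) (A : Matrix (ZMod N) (ZMod N) ℂ)
    (g h : ZMod N) :
    (A * (weylMat N lam)ᴴ) g h = A g (h - lam 0) * conj (stdAddChar (lam 1 * (h - lam 0))) := by
  simp [weylMat, mul_apply, apply_ite, ← sub_eq_iff_eq_add]

lemma sum_stdAddChar_mul (x : ZMod N) :
    ∑ b, stdAddChar (b * x) = if x = 0 then (N : ℂ) else 0 := by
  rw [AddChar.sum_mulShift _ (isPrimitive_stdAddChar N), ZMod.card, Nat.cast_ite,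
    Nat.cast_zero]

lemma weylMat_mul_mul_conjTranspose_apply (lam : Fin 2 → ZMod N)
    (A : Matrix (ZMod N) (ZMod N) ℂ) (g h : ZMod N) :
    (weylMat N lam * A * (weylMat N lam)ᴴ) g h
      = stdAddChar (lam 1 * (g - h)) * A (g - lam 0) (h - lam 0) := by
  rw [Matrix.mul_assoc, weylMat_mul_apply, mul_conjTranspose_weylMat_apply, mul_left_comm,
    stdAddChar_mul_conj, mul_comm]
  ring_nf

lemma sum_weylMat_mul_mul_conjTranspose (A : Matrix (ZMod N) (ZMod N) ℂ) :
    ∑ lam, weylMat N lam * A * (weylMat N lam)ᴴ = ((N : ℂ) * A.trace) • 1 := by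
  ext g h
  have htrace : ∑ a, A (g - a) (g - a) = A.trace :=
    (Equiv.subLeft g).sum_comp fun a => A a a
  rw [sum_finTwoArrow]
  simp only [Matrix.sum_apply, weylMat_mul_mul_conjTranspose_apply, Matrix.smul_apply,
    one_apply, Matrix.cons_val_zero, Matrix.cons_val_one, ← Finset.sum_mul, sum_stdAddChar_mul,
    sub_eq_zero]
  split_ifs with hgh
  · subst hgh; rw [← Finset.mul_sum, htrace]; simp
  · simp

lemma trace_weylMat_mul_conjTranspose (lam mu : Fin 2 → ZMod N) :
    (weylMat N lam * (weylMat N mu)ᴴ).trace = if lam = mu then (N : ℂ) else 0 := by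
  have hdiag : ∀ g, (weylMat N lam * (weylMat N mu)ᴴ) g g
      = if lam 0 = mu 0 then stdAddChar ((g - mu 0) * (lam 1 - mu 1)) else 0 := fun g => by
    have hcond : g = g - mu 0 + lam 0 ↔ lam 0 = mu 0 := by
      constructor <;> intro h <;> linear_combination -h
    rw [mul_conjTranspose_weylMat_apply, weylMat, of_apply]
    simp only [hcond, ite_mul, zero_mul, stdAddChar_mul_conj]
    ring_nf
  have hpair : lam = mu ↔ lam 0 = mu 0 ∧ lam 1 = mu 1 := by
    simp [funext_iff, Fin.forall_fin_two]
  simp only [trace, diag_apply, hdiag]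
  by_cases h0 : lam 0 = mu 0
  · simp only [if_pos h0]
    rw [Fintype.sum_equiv (Equiv.subRight (mu 0))
      (fun x => stdAddChar ((x - mu 0) * (lam 1 - mu 1))) (fun x => stdAddChar (x * (lam 1 - mu 1)))
      fun _ => rfl, sum_stdAddChar_mul]
    simp [hpair, h0, sub_eq_zero]
  · simp [h0, hpair]

lemma dispMat_mul_mul_conjTranspose (lam : Fin 2 → ZMod N) (A : Matrix (ZMod N) (ZMod N) ℂ) :
    dispMat N lam * A * (dispMat N lam)ᴴ = weylMat N lam * A * (weylMat N lam)ᴴ := by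
  obtain ⟨z, hz, hD⟩ := dispMat_eq_smul_weylMat lam
  simp only [hD, conjTranspose_smul, Matrix.smul_mul, Matrix.mul_smul, smul_smul,
    RCLike.star_def, Complex.conj_mul', hz]
  simp

lemma trace_dispMat_mul_conjTranspose (lam mu : Fin 2 → ZMod N) :
    (dispMat N lam * (dispMat N mu)ᴴ).trace = if lam = mu then (N : ℂ) else 0 := by
  split_ifs with h
  · subst h
    obtain ⟨z, hz, hD⟩ := dispMat_eq_smul_weylMat lam
    simp only [hD, conjTranspose_smul, Matrix.smul_mul, Matrix.mul_smul, smul_smul, trace_smul,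
      trace_weylMat_mul_conjTranspose, if_pos, RCLike.star_def, Complex.conj_mul', hz]
    simp
  · obtain ⟨z, -, hDz⟩ := dispMat_eq_smul_weylMat lam
    obtain ⟨w, -, hDw⟩ := dispMat_eq_smul_weylMat mu
    rw [hDz, hDw, conjTranspose_smul, Matrix.smul_mul, Matrix.mul_smul, trace_smul, trace_smul,
      trace_weylMat_mul_conjTranspose, if_neg h, smul_zero, smul_zero]

end WeylHeisenberg

theorem clifford_unitary_trace_ge_one_general (N : ℕ) [NeZero N]
    (F : Matrix (Fin 2) (Fin 2) (ZMod N))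
    (U : Matrix (ZMod N) (ZMod N) ℂ)
    (hU : U * U.conjTranspose = 1)
    (hUF : ∀ lam : Fin 2 → ZMod N,
      U * dispMat N lam = dispMat N (F.mulVec lam) * U) :
    1 ≤ ‖U.trace‖ := by
  have hnorm := norm_trace_sq_eq_card_fixedPoints (dispMat N) (Nat.cast_ne_zero.2 (NeZero.ne N))
    (fun A => by simp only [dispMat_mul_mul_conjTranspose, sum_weylMat_mul_mul_conjTranspose])
    trace_dispMat_mul_conjTranspose hU hUF
  have hfix : 1 ≤ #{lam | F *ᵥ lam = lam} := Finset.card_pos.2 ⟨0, by simp⟩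
  rw [← one_le_sq_iff₀ (norm_nonneg _), hnorm]
  exact_mod_cast hfix

/-- For `N` odd and `F ∈ SL(2, ℤ/Nℤ)`, any unitary `U` implementing `F` on the
Weyl–Heisenberg group (`U D_λ U* = D_{Fλ}`, i.e. the Clifford unitary `U_F`)
satisfies `|Tr U| ≥ 1`; in particular `Tr U_F ≠ 0`. -/
theorem clifford_unitary_trace_ge_one (N : ℕ) [NeZero N] (hN : Odd N)
    (F : Matrix (Fin 2) (Fin 2) (ZMod N)) (hdet : F.det = 1)
    (U : Matrix (ZMod N) (ZMod N) ℂ)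
    (hU : U * U.conjTranspose = 1)
    (hUF : ∀ lam : Fin 2 → ZMod N,
      U * dispMat N lam = dispMat N (F.mulVec lam) * U) :
    1 ≤ ‖U.trace‖ :=
  clifford_unitary_trace_ge_one_general N F U hU hUF

end
end
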